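/- arXiv:math-ph/0512052 — 7 statements merged into one kernel-verified Lean document; each statement's English description precedes it below -/
import Mathlib

section
/- For any unitary N×N complex matrix U with c(U) = sup_{i,j} |U_{ij}|, and any normalized vector ψ ∈ ℂ^N, the Shannon entropies satisfy h(ψ) + h(Uψ) ≥ -2 log c(U), where h(ψ) = -∑_i |ψ_i|² log |ψ_i|². -/
/-!
Riesz–Thorin interpolation. The bilinear form `b ⬝ᵥ U *ᵥ ψ` is bounded by `‖b‖₂ ‖ψ‖₂` since `U`
is unitary, and by `c ‖b‖₁ ‖ψ‖₁` since its entries are bounded by `c`. Hadamard's three-lines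
theorem, applied to the form evaluated on the holomorphic families `(ψᵢ / |ψᵢ|) |ψᵢ| ^ w`,
interpolates between the two and, by duality, gives `‖Uψ‖_{2/(1-t)} ≤ c ^ t ‖ψ‖_{2/(1+t)}` for
`0 ≤ t < 1`. In logarithmic form this compares Rényi entropies of `|Uψ|²` and `|ψ|²`, with
equality at `t = 0`, where both sides vanish; comparing the derivatives at `t = 0` gives the
Shannon entropy bound.
-/

open scoped BigOperators

/-- Shannon entropy of a vector in `ℂ^N` with respect to the canonical basis,
with the convention `0 * log 0 = 0`. -/
noncomputable def shannonEntropy {N : ℕ} (ψ : Fin N → ℂ) : ℝ :=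
  -∑ i, ‖ψ i‖ ^ 2 * Real.log (‖ψ i‖ ^ 2)

namespace MaassenUffink

open Finset Matrix

variable {m n : Type*} [Fintype m] [Fintype n]

noncomputable def pNorm (p : ℝ) (x : n → ℂ) : ℝ := (∑ i, ‖x i‖ ^ p) ^ p⁻¹

lemma pNorm_nonneg (p : ℝ) (x : n → ℂ) : 0 ≤ pNorm p x := by
  unfold pNorm; positivity

lemma star_dotProduct_self_eq (x : n → ℂ) : star x ⬝ᵥ x = ((∑ i, ‖x i‖ ^ 2 : ℝ) : ℂ) := by
  simp [dotProduct, Complex.conj_mul']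

lemma sum_norm_sq_mulVec_of_mem_unitaryGroup [DecidableEq n] {U : Matrix n n ℂ}
    (hU : U ∈ unitaryGroup n ℂ) (x : n → ℂ) : ∑ i, ‖(U *ᵥ x) i‖ ^ 2 = ∑ i, ‖x i‖ ^ 2 := by
  have h : star (U *ᵥ x) ⬝ᵥ (U *ᵥ x) = star x ⬝ᵥ x := by
    rw [star_mulVec, dotProduct_mulVec, vecMul_vecMul, ← star_eq_conjTranspose,
      (mem_unitaryGroup_iff').1 hU, vecMul_one]
  rw [star_dotProduct_self_eq, star_dotProduct_self_eq] at h
  exact_mod_cast h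

lemma pos_of_forall_norm_le_of_mem_unitaryGroup [DecidableEq n] [Nonempty n] {U : Matrix n n ℂ}
    (hU : U ∈ unitaryGroup n ℂ) {c : ℝ} (hc : ∀ i j, ‖U i j‖ ≤ c) : 0 < c := by
  by_contra! h
  have hU0 : U = 0 := ext fun i j => norm_le_zero_iff.1 ((hc i j).trans h)
  have h1 := (mem_unitaryGroup_iff.1 hU).symm
  rw [hU0, zero_mul] at h1
  exact one_ne_zero h1

lemma norm_dotProduct_mulVec_le_of_mem_unitaryGroup [DecidableEq n] {U : Matrix n n ℂ}
    (hU : U ∈ unitaryGroup n ℂ) (x y : n → ℂ) :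
    ‖x ⬝ᵥ U *ᵥ y‖ ≤ √(∑ i, ‖x i‖ ^ 2) * √(∑ i, ‖y i‖ ^ 2) :=
  calc ‖x ⬝ᵥ U *ᵥ y‖ ≤ ∑ i, ‖x i‖ * ‖(U *ᵥ y) i‖ :=
        (norm_sum_le _ _).trans_eq (by simp only [norm_mul])
    _ ≤ √(∑ i, ‖x i‖ ^ 2) * √(∑ i, ‖(U *ᵥ y) i‖ ^ 2) := Real.sum_mul_le_sqrt_mul_sqrt _ _ _
    _ = √(∑ i, ‖x i‖ ^ 2) * √(∑ i, ‖y i‖ ^ 2) := by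
        rw [sum_norm_sq_mulVec_of_mem_unitaryGroup hU]

lemma norm_dotProduct_mulVec_le_of_norm_le {U : Matrix m n ℂ} {c : ℝ}
    (hc : ∀ i j, ‖U i j‖ ≤ c) (x : m → ℂ) (y : n → ℂ) :
    ‖x ⬝ᵥ U *ᵥ y‖ ≤ c * (∑ i, ‖x i‖) * ∑ j, ‖y j‖ :=
  calc ‖x ⬝ᵥ U *ᵥ y‖ = ‖∑ i, ∑ j, x i * U i j * y j‖ := by
        simp only [dotProduct, mulVec, mul_sum, mul_assoc]
    _ ≤ ∑ i, ∑ j, ‖x i‖ * c * ‖y j‖ := by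
        refine (norm_sum_le _ _).trans (sum_le_sum fun i _ => (norm_sum_le _ _).trans ?_)
        gcongr with j
        rw [norm_mul, norm_mul]
        gcongr
        exact hc i j
    _ = c * (∑ i, ‖x i‖) * ∑ j, ‖y j‖ := by
        rw [mul_assoc, sum_mul_sum, mul_sum]
        exact sum_congr rfl fun i _ => by rw [mul_sum]; exact sum_congr rfl fun j _ => by ring

/-- `(w / |w|) * |w| ^ z`, which is `0` at `w = 0` because `0 / 0 = 0`. -/
noncomputable def phaseCpow (w z : ℂ) : ℂ := w / ‖w‖ * Complex.exp (z * Real.log ‖w‖)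

lemma phaseCpow_one (w : ℂ) : phaseCpow w 1 = w := by
  rcases eq_or_ne w 0 with rfl | hw
  · simp [phaseCpow]
  · have hw' : (‖w‖ : ℂ) ≠ 0 := by exact_mod_cast norm_ne_zero_iff.2 hw
    rw [phaseCpow, one_mul, ← Complex.ofReal_exp,
      Real.exp_log (norm_pos_iff.2 hw), div_mul_cancel₀ w hw']

lemma norm_phaseCpow_le (w z : ℂ) : ‖phaseCpow w z‖ ≤ ‖w‖ ^ z.re := by
  rcases eq_or_ne w 0 with rfl | hw
  · simp only [phaseCpow, zero_div, zero_mul, norm_zero]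
    exact Real.rpow_nonneg le_rfl _
  · have hw' : ‖w‖ ≠ 0 := norm_ne_zero_iff.2 hw
    rw [phaseCpow, norm_mul, norm_div, Complex.norm_real, norm_norm, div_self hw', one_mul,
      Complex.norm_exp, Real.rpow_def_of_pos (norm_pos_iff.2 hw), mul_comm]
    simp

@[fun_prop]
lemma differentiable_phaseCpow (w : ℂ) : Differentiable ℂ (phaseCpow w) :=
  (differentiable_const _).mul ((differentiable_id.mul (differentiable_const _)).cexp)

lemma norm_phaseCpow_sq_le (w z : ℂ) : ‖phaseCpow w z‖ ^ 2 ≤ ‖w‖ ^ (2 * z.re) := by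
  rw [mul_comm, Real.rpow_mul (norm_nonneg _), Real.rpow_two]
  gcongr
  exact norm_phaseCpow_le w z

noncomputable def phaseForm (U : Matrix m n ℂ) (b : m → ℂ) (ψ : n → ℂ) (w : ℂ) : ℂ :=
  (fun j => phaseCpow (b j) w) ⬝ᵥ U *ᵥ fun i => phaseCpow (ψ i) w

lemma phaseForm_one (U : Matrix m n ℂ) (b : m → ℂ) (ψ : n → ℂ) :
    phaseForm U b ψ 1 = b ⬝ᵥ U *ᵥ ψ := by
  simp only [phaseForm, phaseCpow_one]

@[fun_prop]
lemma differentiable_phaseForm (U : Matrix m n ℂ) (b : m → ℂ) (ψ : n → ℂ) :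
    Differentiable ℂ (phaseForm U b ψ) := by
  unfold phaseForm
  simp only [dotProduct, mulVec]
  fun_prop

lemma norm_phaseForm_le_of_mem_unitaryGroup [DecidableEq n] {U : Matrix n n ℂ}
    (hU : U ∈ unitaryGroup n ℂ) (b ψ : n → ℂ) (w : ℂ) :
    ‖phaseForm U b ψ w‖ ≤ √(∑ j, ‖b j‖ ^ (2 * w.re)) * √(∑ i, ‖ψ i‖ ^ (2 * w.re)) := by
  refine (norm_dotProduct_mulVec_le_of_mem_unitaryGroup hU _ _).trans ?_
  gcongr <;> exact norm_phaseCpow_sq_le _ w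

lemma norm_phaseForm_le_of_norm_le {U : Matrix m n ℂ} {c : ℝ} (hc0 : 0 ≤ c)
    (hc : ∀ i j, ‖U i j‖ ≤ c) (b : m → ℂ) (ψ : n → ℂ) (w : ℂ) :
    ‖phaseForm U b ψ w‖ ≤ c * (∑ j, ‖b j‖ ^ w.re) * ∑ i, ‖ψ i‖ ^ w.re := by
  refine (norm_dotProduct_mulVec_le_of_norm_le hc _ _).trans ?_
  gcongr <;> exact norm_phaseCpow_le _ w

lemma rpow_le_max_one_rpow {x r R : ℝ} (hx : 0 ≤ x) (h0 : 0 ≤ r) (hR : r ≤ R) :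
    x ^ r ≤ max 1 x ^ R :=
  (Real.rpow_le_rpow hx (le_max_right _ _) h0).trans
    (Real.rpow_le_rpow_of_exponent_le (le_max_left _ _) hR)

lemma sqrt_mul_sqrt_rpow_mul_rpow {a b c t : ℝ} (ha : 0 ≤ a) (hb : 0 ≤ b) (hc : 0 ≤ c)
    (ht : 0 ≤ t) :
    (√a * √b) ^ (1 - t) * (c * a * b) ^ t = c ^ t * a ^ ((1 + t) / 2) * b ^ ((1 + t) / 2) := by
  have hsplit (x : ℝ) (hx : 0 ≤ x) : √x ^ (1 - t) * x ^ t = x ^ ((1 + t) / 2) := by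
    rw [Real.sqrt_eq_rpow, ← Real.rpow_mul hx, ← Real.rpow_add' hx (ne_of_gt (by linarith))]
    ring_nf
  rw [← hsplit a ha, ← hsplit b hb, Real.mul_rpow (by positivity) (by positivity),
    Real.mul_rpow (by positivity) hb, Real.mul_rpow hc ha]
  ring

open Complex.HadamardThreeLines in
theorem norm_dotProduct_mulVec_le_interpolate [DecidableEq n] {U : Matrix n n ℂ}
    (hU : U ∈ unitaryGroup n ℂ) {c : ℝ} (hc0 : 0 ≤ c) (hc : ∀ i j, ‖U i j‖ ≤ c) {t : ℝ}
    (ht : t ∈ Set.Icc (0 : ℝ) 1) (b ψ : n → ℂ) :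
    ‖b ⬝ᵥ U *ᵥ ψ‖ ≤ c ^ t * pNorm (2 / (1 + t)) b * pNorm (2 / (1 + t)) ψ := by
  obtain ⟨ht0, ht1⟩ := ht
  -- `e` maps the strip `0 ≤ re z ≤ 1` onto `1 / (1 + t) ≤ re ≤ 2 / (1 + t)` and `t` to `1`
  set e : ℂ → ℂ := fun z => (1 + z) / (1 + t) with he
  have he_re (z : ℂ) : (e z).re = (1 + z.re) / (1 + t) := by
    rw [he, ← Complex.ofReal_one, ← Complex.ofReal_add, Complex.div_ofReal_re]; simp
  have het : e t = 1 := div_self (by exact_mod_cast (by positivity : (1 + t) ≠ 0))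
  have hdiff : Differentiable ℂ (phaseForm U b ψ ∘ e) := by fun_prop
  have hbdd : BddAbove ((norm ∘ phaseForm U b ψ ∘ e) '' verticalClosedStrip 0 1) := by
    refine ⟨c * (∑ j, max 1 ‖b j‖ ^ (2 : ℝ)) * ∑ i, max 1 ‖ψ i‖ ^ (2 : ℝ), ?_⟩
    rintro _ ⟨z, ⟨hz0, hz1⟩, rfl⟩
    have h0 : 0 ≤ (e z).re := by rw [he_re]; positivity
    have h2 : (e z).re ≤ 2 := by rw [he_re, div_le_iff₀ (by positivity)]; linarith
    refine (norm_phaseForm_le_of_norm_le hc0 hc b ψ (e z)).trans ?_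
    gcongr <;> exact rpow_le_max_one_rpow (norm_nonneg _) h0 h2
  have hedge0 (z : ℂ) (hz : z ∈ Complex.re ⁻¹' {0}) : ‖(phaseForm U b ψ ∘ e) z‖ ≤
      √(∑ j, ‖b j‖ ^ (2 / (1 + t))) * √(∑ i, ‖ψ i‖ ^ (2 / (1 + t))) := by
    have h2e : 2 * (e z).re = 2 / (1 + t) := by rw [he_re, Set.mem_preimage.1 hz]; ring
    simpa only [Function.comp_apply, h2e] using norm_phaseForm_le_of_mem_unitaryGroup hU b ψ (e z)
  have hedge1 (z : ℂ) (hz : z ∈ Complex.re ⁻¹' {1}) : ‖(phaseForm U b ψ ∘ e) z‖ ≤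
      c * (∑ j, ‖b j‖ ^ (2 / (1 + t))) * ∑ i, ‖ψ i‖ ^ (2 / (1 + t)) := by
    have he1 : (e z).re = 2 / (1 + t) := by rw [he_re, Set.mem_preimage.1 hz]; norm_num
    simpa only [Function.comp_apply, he1] using norm_phaseForm_le_of_norm_le hc0 hc b ψ (e z)
  have hinterp := norm_le_interp_of_mem_verticalClosedStrip₀₁' _ (z := t) ⟨ht0, ht1⟩
    hdiff.diffContOnCl hbdd hedge0 hedge1
  rw [Function.comp_apply, het, phaseForm_one, Complex.ofReal_re,
    sqrt_mul_sqrt_rpow_mul_rpow (by positivity) (by positivity) hc0 ht0] at hinterp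
  simpa only [pNorm, inv_div] using hinterp

lemma pNorm_le_of_forall_norm_dotProduct_le {p q : ℝ} (hpq : p.HolderConjugate q) {K : ℝ}
    (hK : 0 ≤ K) (φ : n → ℂ) (h : ∀ b : n → ℂ, ‖b ⬝ᵥ φ‖ ≤ K * pNorm p b) : pNorm q φ ≤ K := by
  set S := ∑ j, ‖φ j‖ ^ q
  -- the extremal vector of Hölder's inequality
  set b : n → ℂ := fun j => star (φ j) * ((‖φ j‖ ^ (q - 2) : ℝ) : ℂ)
  have hbφ : b ⬝ᵥ φ = (S : ℂ) := by
    simp only [b, S, dotProduct, Complex.ofReal_sum]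
    refine sum_congr rfl fun j _ => ?_
    rw [mul_right_comm, Complex.star_def, Complex.conj_mul', ← Complex.ofReal_pow,
      ← Complex.ofReal_mul, ← Real.rpow_two, ← Real.rpow_add' (norm_nonneg _) (by
        simpa using hpq.symm.ne_zero)]
    norm_num
  have hb (j : n) : ‖b j‖ ^ p = ‖φ j‖ ^ q := by
    have hq1 : 1 + (q - 2) ≠ 0 := by linarith [hpq.symm.sub_one_pos]
    rw [norm_mul, norm_star, Complex.norm_real, Real.norm_of_nonneg (by positivity),
      ← Real.rpow_one_add' (norm_nonneg _) hq1, ← Real.rpow_mul (norm_nonneg _)]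
    congr 1
    linarith [hpq.symm.sub_one_mul_conj]
  have hS : S ≤ K * S ^ p⁻¹ := by
    have := h b
    rwa [hbφ, Complex.norm_real, Real.norm_of_nonneg (by positivity), pNorm,
      sum_congr rfl fun j _ => hb j] at this
  change S ^ q⁻¹ ≤ K
  rcases (show 0 ≤ S by positivity).eq_or_lt with hS0 | hSpos
  · rwa [← hS0, Real.zero_rpow hpq.symm.inv_ne_zero]
  · have hSS : S ^ q⁻¹ * S ^ p⁻¹ = S := by
      rw [← Real.rpow_add hSpos, add_comm, hpq.inv_add_inv_eq_one, Real.rpow_one]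
    exact le_of_mul_le_mul_right (hSS.trans_le hS) (by positivity)

theorem pNorm_mulVec_le [DecidableEq n] {U : Matrix n n ℂ} (hU : U ∈ unitaryGroup n ℂ) {c : ℝ}
    (hc0 : 0 ≤ c) (hc : ∀ i j, ‖U i j‖ ≤ c) {t : ℝ} (ht : t ∈ Set.Ico (0 : ℝ) 1) (ψ : n → ℂ) :
    pNorm (2 / (1 - t)) (U *ᵥ ψ) ≤ c ^ t * pNorm (2 / (1 + t)) ψ := by
  obtain ⟨ht0, ht1⟩ := ht
  have hpq : (2 / (1 + t)).HolderConjugate (2 / (1 - t)) := by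
    simpa only [one_div_div] using
      Real.holderConjugate_one_div (a := (1 + t) / 2) (b := (1 - t) / 2) (by linarith)
        (by linarith) (by ring)
  refine pNorm_le_of_forall_norm_dotProduct_le hpq
    (mul_nonneg (Real.rpow_nonneg hc0 t) (pNorm_nonneg _ _)) _ fun b => ?_
  rw [mul_right_comm]
  exact norm_dotProduct_mulVec_le_interpolate hU hc0 hc ⟨ht0, ht1.le⟩ b ψ

lemma sum_rpow_pos_of_sum_eq_one {x : n → ℝ} (hx : ∀ i, 0 ≤ x i) (h : ∑ i, x i = 1) (s : ℝ) :
    0 < ∑ i, x i ^ s := by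
  obtain ⟨i, -, hi⟩ := exists_ne_zero_of_sum_ne_zero (h ▸ one_ne_zero : ∑ i, x i ≠ 0)
  exact sum_pos' (fun j _ => Real.rpow_nonneg (hx j) s)
    ⟨i, mem_univ i, Real.rpow_pos_of_pos ((hx i).lt_of_ne' hi) s⟩

lemma pNorm_eq_sum_norm_sq_rpow (x : n → ℂ) (r : ℝ) :
    pNorm (2 * r) x = (∑ i, (‖x i‖ ^ 2) ^ r) ^ (2 * r)⁻¹ := by
  simp only [pNorm, Real.rpow_mul (norm_nonneg _), Real.rpow_two]

/-- With the Rényi entropy `H_α(x) = log (∑ xᵢ ^ α) / (1 - α)`, this reads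
`H_{1/(1-t)}(|Uψ|²) + H_{1/(1+t)}(|ψ|²) ≥ -2 log c` for `t > 0`. -/
theorem log_sum_rpow_mulVec_le [DecidableEq n] {U : Matrix n n ℂ} (hU : U ∈ unitaryGroup n ℂ)
    {c : ℝ} (hc0 : 0 < c) (hc : ∀ i j, ‖U i j‖ ≤ c) {t : ℝ} (ht : t ∈ Set.Ico (0 : ℝ) 1)
    (ψ : n → ℂ) (hψ : ∑ i, ‖ψ i‖ ^ 2 = 1) :
    (1 - t) / 2 * Real.log (∑ j, (‖(U *ᵥ ψ) j‖ ^ 2) ^ (1 - t)⁻¹) ≤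
      t * Real.log c + (1 + t) / 2 * Real.log (∑ i, (‖ψ i‖ ^ 2) ^ (1 + t)⁻¹) := by
  have hUψ := (sum_norm_sq_mulVec_of_mem_unitaryGroup hU ψ).trans hψ
  have hQ := sum_rpow_pos_of_sum_eq_one (fun j => sq_nonneg ‖(U *ᵥ ψ) j‖) hUψ (1 - t)⁻¹
  have hP := sum_rpow_pos_of_sum_eq_one (fun i => sq_nonneg ‖ψ i‖) hψ (1 + t)⁻¹
  have h := pNorm_mulVec_le hU hc0.le hc ht ψ
  rw [div_eq_mul_inv, div_eq_mul_inv, pNorm_eq_sum_norm_sq_rpow, pNorm_eq_sum_norm_sq_rpow] at h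
  have := Real.log_le_log (by positivity) h
  rw [Real.log_rpow hQ, Real.log_mul (by positivity) (by positivity), Real.log_rpow hc0,
    Real.log_rpow hP] at this
  convert this using 2 <;> · rw [mul_inv, inv_inv]; ring

lemma _root_.HasDerivAt.const_rpow_of_nonneg {a : ℝ} (ha : 0 ≤ a) {f : ℝ → ℝ} {f' x : ℝ}
    (hf : HasDerivAt f f' x) (hfx : f x ≠ 0) :
    HasDerivAt (fun y => a ^ f y) (Real.log a * f' * a ^ f x) x := by
  rcases ha.eq_or_lt with rfl | ha
  · rw [Real.log_zero, zero_mul, zero_mul]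
    refine (hasDerivAt_const x 0).congr_of_eventuallyEq ?_
    filter_upwards [hf.continuousAt.eventually_ne hfx] with y hy
    exact Real.zero_rpow hy
  · exact hf.const_rpow ha

lemma hasDerivAt_log_sum_rpow {x : n → ℝ} (hx : ∀ i, 0 ≤ x i) (hx1 : ∑ i, x i = 1)
    {f : ℝ → ℝ} {f' s : ℝ} (hf : HasDerivAt f f' s) (hfs : f s = 1) :
    HasDerivAt (fun t => Real.log (∑ i, x i ^ f t)) (f' * ∑ i, x i * Real.log (x i)) s := by
  have hsum := HasDerivAt.fun_sum (u := univ) fun i _ =>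
    hf.const_rpow_of_nonneg (hx i) (hfs ▸ one_ne_zero)
  simp only [hfs, Real.rpow_one] at hsum
  convert hsum.log (by simp [hfs, hx1]) using 1
  simp only [hfs, Real.rpow_one, hx1, div_one, mul_sum]
  exact sum_congr rfl fun i _ => by ring

lemma le_of_hasDerivAt_of_eventually_le_mul {g : ℝ → ℝ} {g' L : ℝ} (hg : HasDerivAt g g' 0)
    (hg0 : g 0 = 0) (h : ∀ᶠ t in nhdsWithin 0 (Set.Ioi 0), g t ≤ t * L) : g' ≤ L := by
  have hslope := (hasDerivAt_iff_tendsto_slope.1 hg).mono_left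
    (nhdsWithin_mono 0 (fun _ ht => ne_of_gt ht : Set.Ioi (0 : ℝ) ⊆ {0}ᶜ))
  refine le_of_tendsto hslope ?_
  filter_upwards [h, self_mem_nhdsWithin] with t ht ht0
  rw [slope_def_field, hg0, sub_zero, sub_zero, div_le_iff₀ (Set.mem_Ioi.1 ht0), mul_comm]
  exact ht

theorem sum_mul_log_add_sum_mul_log_le {p : m → ℝ} {q : n → ℝ} (hp : ∀ i, 0 ≤ p i)
    (hq : ∀ j, 0 ≤ q j) (hp1 : ∑ i, p i = 1) (hq1 : ∑ j, q j = 1) {c : ℝ}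
    (h : ∀ t ∈ Set.Ioo (0 : ℝ) 1, (1 - t) / 2 * Real.log (∑ j, q j ^ (1 - t)⁻¹) ≤
      t * Real.log c + (1 + t) / 2 * Real.log (∑ i, p i ^ (1 + t)⁻¹)) :
    (∑ j, q j * Real.log (q j) + ∑ i, p i * Real.log (p i)) / 2 ≤ Real.log c := by
  set g : ℝ → ℝ := fun t => (1 - t) / 2 * Real.log (∑ j, q j ^ (1 - t)⁻¹) -
    (1 + t) / 2 * Real.log (∑ i, p i ^ (1 + t)⁻¹)
  have hQ := hasDerivAt_log_sum_rpow hq hq1 (f := fun t => (1 - t)⁻¹) (f' := 1)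
    (by simpa [Pi.inv_def] using ((hasDerivAt_id (0 : ℝ)).const_sub 1).inv (by norm_num))
    (by norm_num)
  have hP := hasDerivAt_log_sum_rpow hp hp1 (f := fun t => (1 + t)⁻¹) (f' := -1)
    (by simpa [Pi.inv_def] using ((hasDerivAt_id (0 : ℝ)).const_add 1).inv (by norm_num))
    (by norm_num)
  have hg : HasDerivAt g ((∑ j, q j * Real.log (q j) + ∑ i, p i * Real.log (p i)) / 2) 0 :=
    ((((hasDerivAt_id' (0 : ℝ)).const_sub 1).div_const 2).fun_mul hQ).fun_sub
      ((((hasDerivAt_id' (0 : ℝ)).const_add 1).div_const 2).fun_mul hP) |>.congr_deriv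
      (by simp only [sub_zero, add_zero, inv_one, Real.rpow_one, hq1, hp1, Real.log_one]; ring)
  refine le_of_hasDerivAt_of_eventually_le_mul hg (by simp [g, hq1, hp1]) ?_
  filter_upwards [Ioo_mem_nhdsGT one_pos] with t ht
  simp only [g]
  linarith [h t ht]

end MaassenUffink

open MaassenUffink in
/-- **Entropic Uncertainty Principle** (Maassen–Uffink): for a unitary `N × N` matrix `U`
with `c(U) = sup_{i,j} |U_{ij}|` and any normalized `ψ ∈ ℂ^N`,
`h(ψ) + h(Uψ) ≥ -2 log c(U)`. -/
theorem entropic_uncertainty_principle {N : ℕ} (U : Matrix (Fin N) (Fin N) ℂ)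
    (hU : U ∈ Matrix.unitaryGroup (Fin N) ℂ)
    (c : ℝ) (hc : IsGreatest {x : ℝ | ∃ i j, x = ‖U i j‖} c)
    (ψ : Fin N → ℂ) (hψ : ∑ i, ‖ψ i‖ ^ 2 = 1) :
    -2 * Real.log c ≤ shannonEntropy ψ + shannonEntropy (U.mulVec ψ) := by
  obtain ⟨⟨i, -, -⟩, hc_ub⟩ := hc
  have : Nonempty (Fin N) := ⟨i⟩
  have hU_le (i j : Fin N) : ‖U i j‖ ≤ c := hc_ub ⟨i, j, rfl⟩
  have hc0 := pos_of_forall_norm_le_of_mem_unitaryGroup hU hU_le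
  have hUψ := (sum_norm_sq_mulVec_of_mem_unitaryGroup hU ψ).trans hψ
  have key := sum_mul_log_add_sum_mul_log_le (fun i => sq_nonneg ‖ψ i‖)
    (fun j => sq_nonneg ‖U.mulVec ψ j‖) hψ hUψ fun t ht =>
      log_sum_rpow_mulVec_le hU hc0 hU_le ⟨ht.1.le, ht.2⟩ ψ hψ
  simp only [shannonEntropy]
  linarith
end

section
/- Let T be an N×N complex matrix with operator norm ‖T‖_{2,2} ≤ 1, and let c(T) = sup_{j,k} |T_{jk}|. Then for all t ∈ [0,1] and all ψ ∈ ℂ^N, ‖Tψ‖_{2/(1-t)} ≤ c(T)^t · ‖ψ‖_{2/(1+t)}, where ‖·‖_p denotes the ℓ^p norm (with 2/(1-t) interpreted as ∞ when t = 1). -/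
open scoped BigOperators

/-- The `ℓ^p` norm of a vector in `ℂ^N`, for a real exponent `p`. -/
noncomputable def lpNorm {N : ℕ} (p : ℝ) (ψ : Fin N → ℂ) : ℝ :=
  (∑ j, ‖ψ j‖ ^ p) ^ (1 / p)

/-- The `ℓ^∞` norm of a vector in `ℂ^N`. -/
noncomputable def lInftyNorm {N : ℕ} (ψ : Fin N → ℂ) : ℝ :=
  ⨆ j, ‖ψ j‖

/-
This is Riesz–Thorin interpolation between the endpoint bounds `‖T‖_{2 → 2} ≤ 1` and
`‖T‖_{1 → ∞} ≤ c`. For `t < 1`, with `p = 2 / (1 + t)` and its conjugate `q = 2 / (1 - t)`, duality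
reduces the claim to `|φ ⬝ T ψ| ≤ c ^ t ‖φ‖_p ‖ψ‖_p`. Replace `φ` and `ψ` by the analytic families
`φ_z j = φ j |φ j| ^ ((z - t) / (1 + t))`, which equal `φ` at `z = t`; then `z ↦ φ_z ⬝ T ψ_z` is
bounded on `Re z = 0` by the `ℓ²` bound and on `Re z = 1` by the entrywise bound, in terms of
`∑ |φ j| ^ p` and `∑ |ψ k| ^ p`, and Hadamard's three lines theorem interpolates at `Re z = t`.
-/

open Matrix Complex HadamardThreeLines ComplexConjugate

section DotProductBounds

variable {R : Type*} [NormedRing R] {m n : Type*} [Fintype n]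

theorem norm_dotProduct_le_sum (φ x : n → R) : ‖φ ⬝ᵥ x‖ ≤ ∑ j, ‖φ j‖ * ‖x j‖ :=
  (norm_sum_le _ _).trans (Finset.sum_le_sum fun _ _ => norm_mul_le _ _)

theorem norm_mulVec_apply_le {T : Matrix m n R} {c : ℝ} (hc : ∀ j k, ‖T j k‖ ≤ c)
    (ψ : n → R) (j : m) : ‖(T *ᵥ ψ) j‖ ≤ c * ∑ k, ‖ψ k‖ :=
  calc ‖(T *ᵥ ψ) j‖ ≤ ∑ k, ‖T j k‖ * ‖ψ k‖ := norm_dotProduct_le_sum _ _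
    _ ≤ ∑ k, c * ‖ψ k‖ := by gcongr with k; exact hc j k
    _ = c * ∑ k, ‖ψ k‖ := (Finset.mul_sum _ _ _).symm

theorem norm_dotProduct_mulVec_le [Fintype m] {T : Matrix m n R} {c : ℝ}
    (hc : ∀ j k, ‖T j k‖ ≤ c) (φ : m → R) (ψ : n → R) :
    ‖φ ⬝ᵥ T *ᵥ ψ‖ ≤ c * (∑ j, ‖φ j‖) * ∑ k, ‖ψ k‖ :=
  calc ‖φ ⬝ᵥ T *ᵥ ψ‖ ≤ ∑ j, ‖φ j‖ * ‖(T *ᵥ ψ) j‖ := norm_dotProduct_le_sum _ _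
    _ ≤ ∑ j, ‖φ j‖ * (c * ∑ k, ‖ψ k‖) := by gcongr; exact norm_mulVec_apply_le hc ψ _
    _ = c * (∑ j, ‖φ j‖) * ∑ k, ‖ψ k‖ := by rw [← Finset.sum_mul]; ring

end DotProductBounds

theorem norm_dotProduct_mulVec_le_opNorm {𝕜 n : Type*} [RCLike 𝕜] [Fintype n] [DecidableEq n]
    (T : Matrix n n 𝕜) (φ ψ : n → 𝕜) :
    ‖φ ⬝ᵥ T *ᵥ ψ‖ ≤ ‖toEuclideanCLM (𝕜 := 𝕜) T‖ * √(∑ j, ‖φ j‖ ^ 2) * √(∑ k, ‖ψ k‖ ^ 2) :=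
  calc ‖φ ⬝ᵥ T *ᵥ ψ‖ ≤ ∑ j, ‖φ j‖ * ‖(T *ᵥ ψ) j‖ := norm_dotProduct_le_sum _ _
    _ ≤ √(∑ j, ‖φ j‖ ^ 2) * √(∑ j, ‖(T *ᵥ ψ) j‖ ^ 2) := Real.sum_mul_le_sqrt_mul_sqrt _ _ _
    _ = √(∑ j, ‖φ j‖ ^ 2) * ‖toEuclideanCLM (𝕜 := 𝕜) T (WithLp.toLp 2 ψ)‖ := by
      rw [toEuclideanCLM_toLp, EuclideanSpace.norm_eq]
    _ ≤ √(∑ j, ‖φ j‖ ^ 2) * (‖toEuclideanCLM (𝕜 := 𝕜) T‖ * ‖WithLp.toLp 2 ψ‖) := by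
      gcongr; exact ContinuousLinearMap.le_opNorm _ _
    _ = _ := by rw [EuclideanSpace.norm_eq]; ring
theorem Real.rpow_le_one_add_rpow {r e p : ℝ} (hr : 0 ≤ r) (he : 0 ≤ e) (hep : e ≤ p) :
    r ^ e ≤ (1 + r) ^ p :=
  (Real.rpow_le_rpow hr (by linarith) he).trans
    (Real.rpow_le_rpow_of_exponent_le (by linarith) hep)

section Interpolation

variable {ι : Type*}

/-- Stein's analytic family for the exponent `p = 2 / (1 + t)`. -/
noncomputable def interpFamily (t : ℝ) (v : ι → ℂ) (z : ℂ) : ι → ℂ :=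
  fun j => v j * (‖v j‖ : ℂ) ^ ((z - t) / (1 + t))

theorem interpFamily_self (t : ℝ) (v : ι → ℂ) : interpFamily t v t = v := by
  ext j; simp [interpFamily]

theorem norm_interpFamily {t : ℝ} (ht : -1 < t) (v : ι → ℂ) {z : ℂ} (hz : -1 < z.re) (j : ι) :
    ‖interpFamily t v z j‖ = ‖v j‖ ^ ((1 + z.re) / (1 + t)) := by
  have he : (1 + z.re) / (1 + t) = 1 + (z.re - t) / (1 + t) := by
    field_simp [(show 0 < 1 + t by linarith).ne']; ring
  have he_pos : 0 < (1 + z.re) / (1 + t) := div_pos (by linarith) (by linarith)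
  rcases eq_or_ne (v j) 0 with hv | hv
  · rw [interpFamily, hv, zero_mul, norm_zero, Real.zero_rpow he_pos.ne']
  · have hv' : 0 < ‖v j‖ := norm_pos_iff.2 hv
    have hre : ((z - t) / (1 + t)).re = (z.re - t) / (1 + t) := by
      simpa using Complex.div_ofReal_re (z - t) (1 + t)
    rw [interpFamily, norm_mul, norm_cpow_eq_rpow_re_of_pos hv', hre, he,
      Real.rpow_one_add' hv'.le (he ▸ he_pos.ne')]

theorem differentiable_interpFamily (t : ℝ) (v : ι → ℂ) (j : ι) :
    Differentiable ℂ (fun z => interpFamily t v z j) := by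
  rcases eq_or_ne (v j) 0 with hv | hv
  · simp [interpFamily, hv]
  · refine fun z => (DifferentiableAt.const_cpow ?_ (Or.inl ?_)).const_mul (v j)
    · fun_prop
    · exact_mod_cast norm_ne_zero_iff.2 hv

theorem norm_interpFamily_le {t : ℝ} (ht : -1 < t) (v : ι → ℂ) {z : ℂ} (hz0 : 0 ≤ z.re)
    (hz1 : z.re ≤ 1) (j : ι) : ‖interpFamily t v z j‖ ≤ (1 + ‖v j‖) ^ (2 / (1 + t)) := by
  rw [norm_interpFamily ht v (by linarith) j]
  exact Real.rpow_le_one_add_rpow (norm_nonneg _) (div_nonneg (by linarith) (by linarith))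
    (div_le_div_of_nonneg_right (by linarith) (by linarith))

variable [Fintype ι]

theorem sum_norm_interpFamily_sq_of_re_eq_zero {t : ℝ} (ht : -1 < t) (v : ι → ℂ) {z : ℂ}
    (hz : z.re = 0) : ∑ j, ‖interpFamily t v z j‖ ^ 2 = ∑ j, ‖v j‖ ^ (2 / (1 + t)) := by
  refine Finset.sum_congr rfl fun j _ => ?_
  rw [norm_interpFamily ht v (by linarith) j, hz, ← Real.rpow_mul_natCast (norm_nonneg _)]
  congr 1; push_cast; ring

theorem sum_norm_interpFamily_of_re_eq_one {t : ℝ} (ht : -1 < t) (v : ι → ℂ) {z : ℂ}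
    (hz : z.re = 1) : ∑ j, ‖interpFamily t v z j‖ = ∑ j, ‖v j‖ ^ (2 / (1 + t)) := by
  refine Finset.sum_congr rfl fun j _ => ?_
  rw [norm_interpFamily ht v (by linarith) j, hz, one_add_one_eq_two]

end Interpolation

theorem lpNorm_le_of_norm_dotProduct_le {N : ℕ} {p q C : ℝ} (hpq : p.HolderConjugate q)
    (hC : 0 ≤ C) {x : Fin N → ℂ} (h : ∀ φ, ‖φ ⬝ᵥ x‖ ≤ C * lpNorm p φ) : lpNorm q x ≤ C := by
  set S := ∑ j, ‖x j‖ ^ q with hS_def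
  have hq := hpq.symm.pos
  have hS0 : 0 ≤ S := by positivity
  -- the extremal vector for Hölder's inequality
  let φ : Fin N → ℂ := fun j => conj (x j) * ((‖x j‖ ^ (q - 2) : ℝ) : ℂ)
  have hφx : φ ⬝ᵥ x = S := by
    push_cast [dotProduct, hS_def]
    refine Finset.sum_congr rfl fun j _ => ?_
    rw [mul_right_comm, Complex.conj_mul', ← Complex.ofReal_pow, ← Complex.ofReal_mul,
      ← Real.rpow_natCast, ← Real.rpow_add' (norm_nonneg _) (by simpa using hq.ne')]
    norm_num
  have hφ : lpNorm p φ = S ^ (1 / p) := by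
    have hφj : ∀ j, ‖φ j‖ ^ p = ‖x j‖ ^ q := fun j => by
      rw [norm_mul, Complex.norm_real, Real.norm_of_nonneg (by positivity), Complex.norm_conj,
        ← Real.rpow_one_add' (norm_nonneg _) (by linarith [hpq.symm.lt]),
        ← Real.rpow_mul (norm_nonneg _), show 1 + (q - 2) = q - 1 by ring,
        hpq.symm.sub_one_mul_conj]
    simp only [lpNorm, hφj, hS_def]
  have hS : S ≤ C * S ^ (1 / p) := by
    simpa [hφx, hφ, Complex.norm_real, abs_of_nonneg hS0] using h φ
  rcases hS0.eq_or_lt with hS0 | hS_pos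
  · rw [lpNorm, ← hS_def, ← hS0, Real.zero_rpow (by positivity)]
    exact hC
  · refine le_of_mul_le_mul_right ?_ (Real.rpow_pos_of_pos hS_pos (1 / p))
    simp only [lpNorm, ← hS_def, ← Real.rpow_add hS_pos, one_div, hpq.symm.inv_add_inv_eq_one,
      Real.rpow_one] at hS ⊢
    exact hS

theorem norm_dotProduct_mulVec_le_rpow_mul_lpNorm {N : ℕ} {T : Matrix (Fin N) (Fin N) ℂ} {c t : ℝ}
    (hT : ‖toEuclideanCLM (𝕜 := ℂ) T‖ ≤ 1) (hc0 : 0 ≤ c) (hc : ∀ j k, ‖T j k‖ ≤ c)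
    (ht0 : 0 ≤ t) (ht1 : t ≤ 1) (φ ψ : Fin N → ℂ) :
    ‖φ ⬝ᵥ T *ᵥ ψ‖ ≤ c ^ t * lpNorm (2 / (1 + t)) φ * lpNorm (2 / (1 + t)) ψ := by
  set p := 2 / (1 + t) with hp
  set X := (∑ j, ‖φ j‖ ^ p) * ∑ k, ‖ψ k‖ ^ p
  have hX : 0 ≤ X := by positivity
  let F : ℂ → ℂ := fun z => interpFamily t φ z ⬝ᵥ T *ᵥ interpFamily t ψ z
  have ht : -1 < t := by linarith
  have hF_diff : Differentiable ℂ F := by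
    have hφ := differentiable_interpFamily t φ
    have hψ := differentiable_interpFamily t ψ
    simp only [F, dotProduct, mulVec]
    fun_prop
  have hF_bdd : BddAbove ((norm ∘ F) '' verticalClosedStrip 0 1) := by
    refine ⟨c * (∑ j, (1 + ‖φ j‖) ^ p) * ∑ k, (1 + ‖ψ k‖) ^ p, ?_⟩
    rintro _ ⟨z, ⟨hz0, hz1⟩, rfl⟩
    refine (norm_dotProduct_mulVec_le hc _ _).trans ?_
    gcongr with j _ k _
    exacts [norm_interpFamily_le ht φ hz0 hz1 j, norm_interpFamily_le ht ψ hz0 hz1 k]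
  have hF_re0 : ∀ z ∈ re ⁻¹' {0}, ‖F z‖ ≤ X ^ (1 / 2 : ℝ) := fun z hz =>
    calc ‖F z‖ ≤ 1 * √(∑ j, ‖φ j‖ ^ p) * √(∑ k, ‖ψ k‖ ^ p) := by
          rw [← sum_norm_interpFamily_sq_of_re_eq_zero ht φ hz,
            ← sum_norm_interpFamily_sq_of_re_eq_zero ht ψ hz]
          exact (norm_dotProduct_mulVec_le_opNorm T _ _).trans (by gcongr)
      _ = X ^ (1 / 2 : ℝ) := by rw [one_mul, ← Real.sqrt_mul (by positivity), Real.sqrt_eq_rpow]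
  have hF_re1 : ∀ z ∈ re ⁻¹' {1}, ‖F z‖ ≤ c * X := fun z hz =>
    calc ‖F z‖ ≤ _ := norm_dotProduct_mulVec_le hc _ _
      _ = c * X := by
        rw [sum_norm_interpFamily_of_re_eq_one ht φ hz, sum_norm_interpFamily_of_re_eq_one ht ψ hz,
          mul_assoc]
  have hstrip : (t : ℂ) ∈ verticalClosedStrip 0 1 := by simpa [verticalClosedStrip] using ⟨ht0, ht1⟩
  have hthree := norm_le_interp_of_mem_verticalClosedStrip₀₁' F hstrip hF_diff.diffContOnCl hF_bdd
    hF_re0 hF_re1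
  calc ‖φ ⬝ᵥ T *ᵥ ψ‖ = ‖F t‖ := by simp only [F, interpFamily_self]
    _ ≤ (X ^ (1 / 2 : ℝ)) ^ (1 - t) * (c * X) ^ t := by simpa using hthree
    _ = c ^ t * X ^ (1 / p) := by
      rw [← Real.rpow_mul hX, Real.mul_rpow hc0 hX, mul_left_comm, ← Real.rpow_add' hX]
      · congr 2; rw [hp]; field_simp; ring
      · exact ne_of_gt (by linarith)
    _ = c ^ t * lpNorm p φ * lpNorm p ψ := by
      rw [Real.mul_rpow (by positivity) (by positivity), lpNorm, lpNorm, mul_assoc]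

/-- Riesz-interpolation estimate underlying the Entropic Uncertainty Principle:
if `‖T‖_{2,2} ≤ 1` and `c(T) = sup_{j,k} |T_{jk}|`, then for all `t ∈ [0,1]` and all `ψ`,
`‖Tψ‖_{2/(1-t)} ≤ c(T)^t ‖ψ‖_{2/(1+t)}`, where for `t = 1` the exponent `2/(1-t)` is
interpreted as `∞`. -/
theorem riesz_interpolation_estimate {N : ℕ} (T : Matrix (Fin N) (Fin N) ℂ)
    (hT : ‖Matrix.toEuclideanCLM (𝕜 := ℂ) T‖ ≤ 1)
    (c : ℝ) (hc : IsGreatest {x : ℝ | ∃ j k, x = ‖T j k‖} c)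
    (t : ℝ) (ht : t ∈ Set.Icc (0 : ℝ) 1) (ψ : Fin N → ℂ) :
    (t < 1 → lpNorm (2 / (1 - t)) (T.mulVec ψ) ≤ c ^ t * lpNorm (2 / (1 + t)) ψ) ∧
      (t = 1 → lInftyNorm (T.mulVec ψ) ≤ c ^ t * lpNorm (2 / (1 + t)) ψ) := by
  obtain ⟨ht0, ht1⟩ := ht
  have hc_entry : ∀ j k, ‖T j k‖ ≤ c := fun j k => hc.2 ⟨j, k, rfl⟩
  have hc0 : 0 ≤ c := by
    obtain ⟨j, k, hjk⟩ := hc.1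
    exact hjk ▸ norm_nonneg _
  refine ⟨fun ht => ?_, fun ht => ?_⟩
  · have hpq : (2 / (1 + t)).HolderConjugate (2 / (1 - t)) := by
      simpa using Real.HolderConjugate.inv_inv (a := (1 + t) / 2) (b := (1 - t) / 2)
        (by linarith) (by linarith) (by ring)
    refine lpNorm_le_of_norm_dotProduct_le hpq (by unfold lpNorm; positivity) fun φ => ?_
    exact (norm_dotProduct_mulVec_le_rpow_mul_lpNorm hT hc0 hc_entry ht0 ht1 φ ψ).trans_eq
      (mul_right_comm _ _ _)
  · subst ht
    have hl1 : lpNorm (2 / (1 + 1)) ψ = ∑ k, ‖ψ k‖ := by norm_num [lpNorm]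
    rw [hl1, Real.rpow_one]
    exact Real.iSup_le (norm_mulVec_apply_le hc_entry ψ) (by positivity)
end

section
/- Let H be a finite-dimensional Hilbert space with a family of orthogonal projectors P_1,…,P_N satisfying P_i P_j = δ_{ij} P_i and ∑_j P_j = I. Let U be a unitary operator on H, set U_{jk} = P_j U P_k and c(U) = max_{j,k} ‖U_{jk}‖. Then for any normalized Ψ ∈ H, defining h(Ψ) = -∑_j ‖P_j Ψ‖² log ‖P_j Ψ‖², one has h(UΨ) + h(Ψ) ≥ -2 log c(U). -/
/-!
The numbers `M j k = ⟪P j (U Ψ), U (P k Ψ)⟫` form a Kirkwood–Dirac quasiprobability whose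
marginals are the two distributions `‖P j (U Ψ)‖²` and `‖P k Ψ‖²`, and `|M j k|` is at most
`c ‖P j (U Ψ)‖ ‖P k Ψ‖`. Following Maassen–Uffink, interpolate with the entire function
`F z = ∑ M j k (‖P j (U Ψ)‖ ‖P k Ψ‖) ^ z`: on `re z = 0` it is a bilinear form in unimodular
vectors, hence bounded by `1`, and on `re z = 1` it is bounded by `c`. By the three lines
theorem `‖F t‖ ≤ c ^ t` on `[0, 1]`; since `F 0 = 1`, comparing derivatives at `t = 0` gives
`F' 0 ≤ log c`, and `F' 0` is minus half the sum of the two entropies.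
-/

open Complex Finset
open Complex.HadamardThreeLines (verticalStrip verticalClosedStrip)

local notation "⟪" x ", " y "⟫" => @inner ℂ _ _ x y

theorem norm_sum_sq_of_pairwise_inner_eq_zero {E ι : Type*} [NormedAddCommGroup E]
    [InnerProductSpace ℂ E] [Fintype ι] (v : ι → E) (hv : Pairwise fun i j => ⟪v i, v j⟫ = 0) :
    ‖∑ i, v i‖ ^ 2 = ∑ i, ‖v i‖ ^ 2 := by
  rw [← @inner_self_eq_norm_sq ℂ, sum_inner, map_sum]
  refine sum_congr rfl fun i _ => ?_
  rw [inner_sum, sum_eq_single i (fun j _ hji => hv hji.symm) (by simp), inner_self_eq_norm_sq]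

section Projections

variable {H ι : Type*} [NormedAddCommGroup H] [InnerProductSpace ℂ H] {P : ι → H →L[ℂ] H}

theorem proj_apply_proj_apply [DecidableEq ι]
    (horth : ∀ i j, (P i).comp (P j) = if i = j then P i else 0)
    (i j : ι) (x : H) : P i (P j x) = if i = j then P i x else 0 := by
  rw [← ContinuousLinearMap.comp_apply, horth]
  split_ifs <;> rfl

theorem sum_proj_apply [Fintype ι] (hsum : ∑ i, P i = ContinuousLinearMap.id ℂ H) (x : H) :
    ∑ i, P i x = x := by
  rw [← _root_.sum_apply, hsum, ContinuousLinearMap.id_apply]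

theorem inner_proj_apply_proj_apply [CompleteSpace H] [DecidableEq ι]
    (hsa : ∀ i, IsSelfAdjoint (P i))
    (horth : ∀ i j, (P i).comp (P j) = if i = j then P i else 0) (i j : ι) (x y : H) :
    ⟪P i x, P j y⟫ = if i = j then ⟪P i x, y⟫ else 0 := by
  have hsymm : ∀ z, ⟪P i x, z⟫ = ⟪x, P i z⟫ := (hsa i).isSymmetric x
  rw [hsymm, proj_apply_proj_apply horth, hsymm]
  split_ifs
  · rfl
  · exact inner_zero_right _

theorem inner_proj_apply_self [CompleteSpace H] [DecidableEq ι]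
    (hsa : ∀ i, IsSelfAdjoint (P i))
    (horth : ∀ i j, (P i).comp (P j) = if i = j then P i else 0) (i : ι) (x : H) :
    ⟪P i x, x⟫ = (‖P i x‖ : ℂ) ^ 2 := by
  simpa using (inner_proj_apply_proj_apply hsa horth i i x x).symm.trans
    (inner_self_eq_norm_sq_to_K (P i x))

theorem norm_sum_smul_proj_apply_sq [CompleteSpace H] [Fintype ι] [DecidableEq ι]
    (hsa : ∀ i, IsSelfAdjoint (P i))
    (horth : ∀ i j, (P i).comp (P j) = if i = j then P i else 0) (x : ι → ℂ) (u : H) :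
    ‖∑ i, x i • P i u‖ ^ 2 = ∑ i, ‖x i‖ ^ 2 * ‖P i u‖ ^ 2 := by
  rw [norm_sum_sq_of_pairwise_inner_eq_zero]
  · simp only [norm_smul, mul_pow]
  · intro i j hij
    rw [inner_smul_left, inner_smul_right, inner_proj_apply_proj_apply hsa horth, if_neg hij,
      mul_zero, mul_zero]

theorem sum_norm_proj_apply_sq [CompleteSpace H] [Fintype ι] [DecidableEq ι]
    (hsa : ∀ i, IsSelfAdjoint (P i))
    (horth : ∀ i j, (P i).comp (P j) = if i = j then P i else 0)
    (hsum : ∑ i, P i = ContinuousLinearMap.id ℂ H) (u : H) :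
    ∑ i, ‖P i u‖ ^ 2 = ‖u‖ ^ 2 := by
  simpa [sum_proj_apply hsum] using (norm_sum_smul_proj_apply_sq hsa horth (fun _ => 1) u).symm

theorem norm_sum_smul_proj_apply_le [CompleteSpace H] [Fintype ι] [DecidableEq ι]
    (hsa : ∀ i, IsSelfAdjoint (P i))
    (horth : ∀ i j, (P i).comp (P j) = if i = j then P i else 0)
    (hsum : ∑ i, P i = ContinuousLinearMap.id ℂ H) {x : ι → ℂ} (hx : ∀ i, ‖x i‖ ≤ 1) (u : H) :
    ‖∑ i, x i • P i u‖ ≤ ‖u‖ := by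
  refine (sq_le_sq₀ (norm_nonneg _) (norm_nonneg _)).mp ?_
  rw [norm_sum_smul_proj_apply_sq hsa horth, ← sum_norm_proj_apply_sq hsa horth hsum u]
  gcongr with i
  exact mul_le_of_le_one_left (sq_nonneg _) (pow_le_one₀ (norm_nonneg _) (hx i))

end Projections

noncomputable def kirkwoodDirac {H ι : Type*} [NormedAddCommGroup H] [InnerProductSpace ℂ H]
    (P : ι → H →L[ℂ] H) (U : H →L[ℂ] H) (Ψ : H) (j k : ι) : ℂ :=
  ⟪P j (U Ψ), U (P k Ψ)⟫

section KirkwoodDirac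

variable {H ι : Type*} [NormedAddCommGroup H] [InnerProductSpace ℂ H] [CompleteSpace H]
  [DecidableEq ι] {P : ι → H →L[ℂ] H} {U : H →L[ℂ] H} {Ψ : H}

theorem sum_kirkwoodDirac_right [Fintype ι] (hsa : ∀ i, IsSelfAdjoint (P i))
    (horth : ∀ i j, (P i).comp (P j) = if i = j then P i else 0)
    (hsum : ∑ i, P i = ContinuousLinearMap.id ℂ H) (j : ι) :
    ∑ k, kirkwoodDirac P U Ψ j k = (‖P j (U Ψ)‖ : ℂ) ^ 2 := by
  simp only [kirkwoodDirac, ← inner_sum, ← map_sum, sum_proj_apply hsum,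
    inner_proj_apply_self hsa horth]

theorem sum_kirkwoodDirac_left [Fintype ι] (hsa : ∀ i, IsSelfAdjoint (P i))
    (horth : ∀ i j, (P i).comp (P j) = if i = j then P i else 0)
    (hsum : ∑ i, P i = ContinuousLinearMap.id ℂ H) (hU : ∀ x y, ⟪U x, U y⟫ = ⟪x, y⟫) (k : ι) :
    ∑ j, kirkwoodDirac P U Ψ j k = (‖P k Ψ‖ : ℂ) ^ 2 := by
  simp only [kirkwoodDirac, ← sum_inner, sum_proj_apply hsum, hU]
  rw [← inner_conj_symm, inner_proj_apply_self hsa horth, ← ofReal_pow, conj_ofReal]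

theorem norm_kirkwoodDirac_le (hsa : ∀ i, IsSelfAdjoint (P i))
    (horth : ∀ i j, (P i).comp (P j) = if i = j then P i else 0) (j k : ι) :
    ‖kirkwoodDirac P U Ψ j k‖ ≤ ‖(P j).comp (U.comp (P k))‖ * ‖P j (U Ψ)‖ * ‖P k Ψ‖ := by
  have h : kirkwoodDirac P U Ψ j k = ⟪P j (U Ψ), (P j).comp (U.comp (P k)) (P k Ψ)⟫ := by
    simp only [kirkwoodDirac, ContinuousLinearMap.comp_apply, proj_apply_proj_apply horth]
    simpa using (inner_proj_apply_proj_apply hsa horth j j (U Ψ) (U (P k Ψ))).symm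
  rw [h, mul_comm _ ‖P j (U Ψ)‖, mul_assoc]
  exact (norm_inner_le_norm _ _).trans (by gcongr; exact ContinuousLinearMap.le_opNorm _ _)

theorem norm_sum_sum_mul_kirkwoodDirac_le [Fintype ι] (hsa : ∀ i, IsSelfAdjoint (P i))
    (horth : ∀ i j, (P i).comp (P j) = if i = j then P i else 0)
    (hsum : ∑ i, P i = ContinuousLinearMap.id ℂ H) (hU : ∀ x y, ⟪U x, U y⟫ = ⟪x, y⟫)
    {x y : ι → ℂ} (hx : ∀ j, ‖x j‖ ≤ 1) (hy : ∀ k, ‖y k‖ ≤ 1) :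
    ‖∑ j, ∑ k, x j * y k * kirkwoodDirac P U Ψ j k‖ ≤ ‖Ψ‖ ^ 2 := by
  have h : ∑ j, ∑ k, x j * y k * kirkwoodDirac P U Ψ j k =
      ⟪∑ j, (starRingEnd ℂ) (x j) • P j (U Ψ), U (∑ k, y k • P k Ψ)⟫ := by
    simp only [kirkwoodDirac, map_sum, map_smul, sum_inner, inner_sum, inner_smul_left,
      inner_smul_right, conj_conj, mul_sum, mul_assoc]
    rw [sum_comm]
    exact sum_congr rfl fun _ _ => sum_congr rfl fun _ _ => mul_left_comm _ _ _
  have hUnorm : ∀ v, ‖U v‖ = ‖v‖ := (LinearMap.norm_map_iff_inner_map_map U).mpr hU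
  rw [h, sq]
  refine (norm_inner_le_norm _ _).trans (mul_le_mul ?_ ?_ (norm_nonneg _) (norm_nonneg _))
  · simpa [hUnorm] using norm_sum_smul_proj_apply_le hsa horth hsum
      (x := fun j => (starRingEnd ℂ) (x j)) (by simpa using hx) (U Ψ)
  · rw [hUnorm]
    exact norm_sum_smul_proj_apply_le hsa horth hsum hy Ψ

end KirkwoodDirac

theorem re_le_log_of_hasDerivAt_of_three_lines {F : ℂ → ℂ} {D : ℂ} {c : ℝ} (hc : 0 < c)
    (hF : DiffContOnCl ℂ F (verticalStrip 0 1))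
    (hB : BddAbove ((norm ∘ F) '' verticalClosedStrip 0 1))
    (h0 : ∀ z ∈ re ⁻¹' {0}, ‖F z‖ ≤ 1) (h1 : ∀ z ∈ re ⁻¹' {1}, ‖F z‖ ≤ c)
    (hF0 : F 0 = 1) (hD : HasDerivAt F D 0) : D.re ≤ Real.log c := by
  set φ : ℝ → ℝ := fun t => Real.exp (Real.log c * t) - (F t).re
  have hφ : HasDerivAt φ (Real.log c - D.re) 0 := by
    have hexp : HasDerivAt (fun t : ℝ => Real.exp (Real.log c * t)) (Real.log c) 0 := by
      simpa using ((hasDerivAt_id (0 : ℝ)).const_mul (Real.log c)).exp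
    exact hexp.sub (HasDerivAt.real_of_complex (by simpa using hD))
  have hmin : IsMinOn φ (Set.Icc 0 1) 0 := by
    intro t ht
    have h3 := HadamardThreeLines.norm_le_interp_of_mem_verticalClosedStrip₀₁' F
      (z := t) (by simpa [verticalClosedStrip] using ht) hF hB h0 h1
    rw [ofReal_re, Real.one_rpow, one_mul, Real.rpow_def_of_pos hc] at h3
    show φ 0 ≤ φ t
    simp only [φ, mul_zero, Real.exp_zero, ofReal_zero, hF0, one_re, sub_self]
    linarith [re_le_norm (F t)]
  have hseg : segment ℝ 0 (0 + 1) ⊆ Set.Icc (0 : ℝ) 1 := by simp [segment_eq_Icc]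
  have := hmin.localize.hasFDerivWithinAt_nonneg hφ.hasFDerivAt.hasFDerivWithinAt
    (mem_posTangentConeAt_of_segment_subset hseg)
  simpa only [ContinuousLinearMap.toSpanSingleton_apply, smul_eq_mul, one_mul, sub_nonneg]
    using this

section ExpSum

variable {α : Type*} [Fintype α] (m : α → ℂ) (w : α → ℝ)

noncomputable def expSum (z : ℂ) : ℂ := ∑ i, m i * exp (z * w i)

theorem expSum_zero : expSum m w 0 = ∑ i, m i := by simp [expSum]

theorem hasDerivAt_expSum (z : ℂ) :
    HasDerivAt (expSum m w) (∑ i, m i * w i * exp (z * w i)) z := by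
  refine HasDerivAt.fun_sum fun i _ => ?_
  simpa [mul_comm, mul_assoc, mul_left_comm] using
    ((hasDerivAt_id z).mul_const (w i : ℂ)).cexp.const_mul (m i)

theorem differentiable_expSum : Differentiable ℂ (expSum m w) :=
  fun z => (hasDerivAt_expSum m w z).differentiableAt

theorem norm_exp_mul_ofReal (z : ℂ) (r : ℝ) : ‖exp (z * r)‖ = Real.exp (z.re * r) := by
  simp [norm_exp]

theorem norm_expSum_le (z : ℂ) : ‖expSum m w z‖ ≤ ∑ i, ‖m i‖ * Real.exp (z.re * w i) :=
  (norm_sum_le _ _).trans_eq (sum_congr rfl fun i _ => by rw [norm_mul, norm_exp_mul_ofReal])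

theorem bddAbove_norm_expSum : BddAbove ((norm ∘ expSum m w) '' verticalClosedStrip 0 1) := by
  refine ⟨∑ i, ‖m i‖ * Real.exp |w i|, ?_⟩
  rintro _ ⟨z, ⟨hz0, hz1⟩, rfl⟩
  refine (norm_expSum_le m w z).trans (sum_le_sum fun i _ => ?_)
  gcongr
  calc z.re * w i ≤ |z.re * w i| := le_abs_self _
    _ = |z.re| * |w i| := abs_mul _ _
    _ ≤ |w i| := mul_le_of_le_one_left (abs_nonneg _) (abs_le.mpr ⟨by linarith, hz1⟩)

end ExpSum

-- `Real.log 0 = 0`, so `exp (log b) = b` fails at `b = 0`; there `hs` forces `s ≤ 0` instead.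
theorem mul_exp_log_add_log_le {s b a c : ℝ} (hb : 0 ≤ b) (ha : 0 ≤ a) (hs : s ≤ c * b * a) :
    s * Real.exp (Real.log b + Real.log a) ≤ c * b ^ 2 * a ^ 2 := by
  rcases hb.eq_or_lt with rfl | hb
  · simpa using mul_nonpos_of_nonpos_of_nonneg (by simpa using hs) (Real.exp_pos (Real.log a)).le
  rcases ha.eq_or_lt with rfl | ha
  · simpa using mul_nonpos_of_nonpos_of_nonneg (by simpa using hs) (Real.exp_pos (Real.log b)).le
  rw [Real.exp_add, Real.exp_log hb, Real.exp_log ha]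
  nlinarith [mul_pos hb ha]

theorem sum_mul_ofReal_log_add_log {ι κ : Type*} [Fintype ι] [Fintype κ]
    (M : ι → κ → ℂ) (b : ι → ℝ) (a : κ → ℝ) (hrow : ∀ j, ∑ k, M j k = b j ^ 2)
    (hcol : ∀ k, ∑ j, M j k = a k ^ 2) :
    ∑ j, ∑ k, M j k * ((Real.log (b j) + Real.log (a k) : ℝ) : ℂ) =
      ((∑ j, b j ^ 2 * Real.log (b j) + ∑ k, a k ^ 2 * Real.log (a k) : ℝ) : ℂ) := by
  simp only [ofReal_add, mul_add, sum_add_distrib]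
  rw [sum_comm (f := fun j k => M j k * (Real.log (a k) : ℂ))]
  simp only [← sum_mul, hrow, hcol]
  push_cast
  ring

theorem neg_two_mul_log_le_of_bilinear_bound {ι κ : Type*} [Fintype ι] [Fintype κ]
    (M : ι → κ → ℂ) (b : ι → ℝ) (a : κ → ℝ) (c : ℝ) (hb : ∀ j, 0 ≤ b j) (ha : ∀ k, 0 ≤ a k)
    (hb1 : ∑ j, b j ^ 2 = 1) (hrow : ∀ j, ∑ k, M j k = b j ^ 2)
    (hcol : ∀ k, ∑ j, M j k = a k ^ 2) (hM : ∀ j k, ‖M j k‖ ≤ c * b j * a k)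
    (hbil : ∀ (x : ι → ℂ) (y : κ → ℂ), (∀ j, ‖x j‖ = 1) → (∀ k, ‖y k‖ = 1) →
      ‖∑ j, ∑ k, x j * y k * M j k‖ ≤ 1) :
    -2 * Real.log c ≤
      (-∑ j, b j ^ 2 * Real.log (b j ^ 2)) + (-∑ k, a k ^ 2 * Real.log (a k ^ 2)) := by
  set m : ι × κ → ℂ := fun p => M p.1 p.2
  set w : ι × κ → ℝ := fun p => Real.log (b p.1) + Real.log (a p.2)
  have hM1 : ∑ j, ∑ k, M j k = 1 := by simp only [hrow]; exact_mod_cast hb1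
  have ha1 : ∑ k, a k ^ 2 = 1 := by
    have h := hM1
    rw [sum_comm] at h
    simp only [hcol] at h
    exact_mod_cast h
  have hc : 0 < c := by
    by_contra! hc
    have hM0 : ∀ j k, M j k = 0 := fun j k => norm_le_zero_iff.mp <| (hM j k).trans <|
      mul_nonpos_of_nonpos_of_nonneg (mul_nonpos_of_nonpos_of_nonneg hc (hb j)) (ha k)
    simp [hM0] at hM1
  have hF0 : expSum m w 0 = 1 := by rw [expSum_zero, Fintype.sum_prod_type]; exact hM1
  have h0 : ∀ z ∈ re ⁻¹' {0}, ‖expSum m w z‖ ≤ 1 := by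
    intro z hz
    have hunit : ∀ r : ℝ, ‖exp (z * r)‖ = 1 := fun r => by
      rw [norm_exp_mul_ofReal, show z.re = 0 from hz, zero_mul, Real.exp_zero]
    convert hbil (fun j => exp (z * Real.log (b j))) (fun k => exp (z * Real.log (a k)))
      (fun j => hunit _) (fun k => hunit _) using 2
    rw [expSum, Fintype.sum_prod_type]
    refine sum_congr rfl fun j _ => sum_congr rfl fun k _ => ?_
    simp only [m, w, ofReal_add, mul_add, exp_add]
    ring
  have h1 : ∀ z ∈ re ⁻¹' {1}, ‖expSum m w z‖ ≤ c := by
    intro z hz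
    calc ‖expSum m w z‖ ≤ ∑ p, ‖m p‖ * Real.exp (z.re * w p) := norm_expSum_le m w z
      _ ≤ ∑ p : ι × κ, c * b p.1 ^ 2 * a p.2 ^ 2 := sum_le_sum fun p _ => by
          rw [show z.re = 1 from hz, one_mul]
          exact mul_exp_log_add_log_le (hb p.1) (ha p.2) (hM p.1 p.2)
      _ = c := by
          simp only [Fintype.sum_prod_type, mul_assoc, ← mul_sum, ← sum_mul, ha1, hb1]; ring
  have key := re_le_log_of_hasDerivAt_of_three_lines hc (differentiable_expSum m w).diffContOnCl
    (bddAbove_norm_expSum m w) h0 h1 hF0 (hasDerivAt_expSum m w 0)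
  simp only [zero_mul, exp_zero, mul_one, Fintype.sum_prod_type, m, w,
    sum_mul_ofReal_log_add_log M b a hrow hcol, ofReal_re] at key
  simp only [Real.log_pow, Nat.cast_ofNat, mul_left_comm _ (2 : ℝ), ← mul_sum]
  linarith

theorem vectorial_entropic_uncertainty_principle_general
    {H : Type*} [NormedAddCommGroup H] [InnerProductSpace ℂ H] [FiniteDimensional ℂ H]
    {N : ℕ} (P : Fin N → (H →L[ℂ] H))
    (hsa : ∀ i, IsSelfAdjoint (P i))
    (horth : ∀ i j, (P i).comp (P j) = if i = j then P i else 0)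
    (hsum : ∑ i, P i = ContinuousLinearMap.id ℂ H)
    (U : H →L[ℂ] H)
    (hU2 : (ContinuousLinearMap.adjoint U).comp U = ContinuousLinearMap.id ℂ H)
    (c : ℝ) (hc : IsGreatest {x : ℝ | ∃ j k, x = ‖(P j).comp (U.comp (P k))‖} c)
    (Ψ : H) (hΨ : ‖Ψ‖ = 1) :
    -2 * Real.log c ≤
      (-∑ j, ‖P j (U Ψ)‖ ^ 2 * Real.log (‖P j (U Ψ)‖ ^ 2)) +
        (-∑ j, ‖P j Ψ‖ ^ 2 * Real.log (‖P j Ψ‖ ^ 2)) := by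
  have hU : ∀ x y, ⟪U x, U y⟫ = ⟪x, y⟫ := U.inner_map_map_iff_adjoint_comp_self.mpr hU2
  have hUΨ : ‖U Ψ‖ = 1 := by rw [U.norm_map_iff_adjoint_comp_self.mpr hU2, hΨ]
  refine neg_two_mul_log_le_of_bilinear_bound (kirkwoodDirac P U Ψ) _ _ c
    (fun _ => norm_nonneg _) (fun _ => norm_nonneg _) ?_ (sum_kirkwoodDirac_right hsa horth hsum)
    (sum_kirkwoodDirac_left hsa horth hsum hU) (fun j k => ?_) (fun x y hx hy => ?_)
  · rw [sum_norm_proj_apply_sq hsa horth hsum, hUΨ, one_pow]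
  · refine (norm_kirkwoodDirac_le hsa horth j k).trans ?_
    gcongr
    exact hc.2 ⟨j, k, rfl⟩
  · simpa [hΨ] using norm_sum_sum_mul_kirkwoodDirac_le (Ψ := Ψ) hsa horth hsum hU
      (fun j => (hx j).le) (fun k => (hy k).le)

/-- **Vectorial Entropic Uncertainty Principle**: given a resolution of the identity by
mutually orthogonal projectors `P_1, …, P_N` on a finite-dimensional Hilbert space `H`,
a unitary `U`, and `c(U) = max_{j,k} ‖P_j U P_k‖`, any normalized `Ψ ∈ H` satisfies
`h(UΨ) + h(Ψ) ≥ -2 log c(U)`, where `h(Ψ) = -∑_j ‖P_j Ψ‖² log ‖P_j Ψ‖²`. -/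
theorem vectorial_entropic_uncertainty_principle
    {H : Type*} [NormedAddCommGroup H] [InnerProductSpace ℂ H] [FiniteDimensional ℂ H]
    {N : ℕ} (P : Fin N → (H →L[ℂ] H))
    (hsa : ∀ i, IsSelfAdjoint (P i))
    (horth : ∀ i j, (P i).comp (P j) = if i = j then P i else 0)
    (hsum : ∑ i, P i = ContinuousLinearMap.id ℂ H)
    (U : H →L[ℂ] H)
    (hU1 : U.comp (ContinuousLinearMap.adjoint U) = ContinuousLinearMap.id ℂ H)
    (hU2 : (ContinuousLinearMap.adjoint U).comp U = ContinuousLinearMap.id ℂ H)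
    (c : ℝ) (hc : IsGreatest {x : ℝ | ∃ j k, x = ‖(P j).comp (U.comp (P k))‖} c)
    (Ψ : H) (hΨ : ‖Ψ‖ = 1) :
    -2 * Real.log c ≤
      (-∑ j, ‖P j (U Ψ)‖ ^ 2 * Real.log (‖P j (U Ψ)‖ ^ 2)) +
        (-∑ j, ‖P j Ψ‖ ^ 2 * Real.log (‖P j Ψ‖ ^ 2)) :=
  vectorial_entropic_uncertainty_principle_general P hsa horth hsum U hU2 c hc Ψ hΨ
end

section
/- Let w ∈ ℂ^D be a normalized eigenvector of the inverse discrete Fourier transform F_D^*. Then its Shannon entropy h(w) = -∑_{ε=0}^{D-1} |w_ε|² log |w_ε|² satisfies h(w) ≥ (log D)/2. -/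
/-!
For `0 ≤ t < 1`, `p = 2/(1+t)` and `q = 2/(1-t)`, complex interpolation (Hadamard's three-lines
theorem) between Parseval's identity and the entrywise bound `|(F_D)_{jk}| = D^{-1/2}` gives the
Hausdorff–Young inequality `‖F_D^* v‖_q ≤ D^{-t/2} ‖v‖_p`. For an eigenvector `w` the eigenvalue
has modulus one, so `g(t) = log ‖w‖_q - log ‖w‖_p + (t/2) log D ≤ 0 = g(0)` for `0 < t < 1`.
Differentiating the `ℓ^p` norms in the exponent at `p = 2` gives `g'(0) = (log D)/2 - h(w)`, and
`g'(0) ≤ 0` is the claim.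
-/

open scoped BigOperators Matrix

/-- The `D`-dimensional discrete Fourier transform, with entries
`(F_D)_{jk} = D^{-1/2} e^{-2πi jk/D}`. -/
noncomputable def dft (D : ℕ) : Matrix (Fin D) (Fin D) ℂ :=
  fun j k => (1 / Real.sqrt D : ℝ) *
    Complex.exp (-2 * Real.pi * Complex.I * ((j : ℕ) : ℂ) * ((k : ℕ) : ℂ) / (D : ℂ))

open Complex Finset Filter Topology
open scoped Real ComplexConjugate

lemma sum_norm_sq_eq_star_dotProduct {ι : Type*} [Fintype ι] (v : ι → ℂ) :
    ((∑ i, ‖v i‖ ^ 2 : ℝ) : ℂ) = star v ⬝ᵥ v := by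
  simp [dotProduct, Complex.conj_mul']

lemma sum_norm_sq_mulVec_of_conjTranspose_mul_self {m n : Type*} [Fintype m] [Fintype n]
    [DecidableEq n] {A : Matrix m n ℂ} (hA : Aᴴ * A = 1) (v : n → ℂ) :
    ∑ j, ‖(A *ᵥ v) j‖ ^ 2 = ∑ k, ‖v k‖ ^ 2 := by
  apply Complex.ofReal_injective
  rw [sum_norm_sq_eq_star_dotProduct, sum_norm_sq_eq_star_dotProduct, Matrix.star_mulVec,
    ← Matrix.dotProduct_mulVec, Matrix.mulVec_mulVec, hA, Matrix.one_mulVec]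

lemma dft_conjTranspose_apply {D : ℕ} (j k : Fin D) :
    (dft D)ᴴ j k = ((√D)⁻¹ : ℝ) * exp (2 * π * I / D) ^ ((j : ℕ) * (k : ℕ)) := by
  rw [Matrix.conjTranspose_apply, dft, ← Complex.exp_nat_mul, star_mul', star_def,
    ← exp_conj]
  simp [map_ofNat]
  left
  ring_nf

lemma norm_dft_conjTranspose_apply {D : ℕ} (j k : Fin D) : ‖(dft D)ᴴ j k‖ = (√D)⁻¹ := by
  have hD : D ≠ 0 := Fin.pos_iff_nonempty.mpr ⟨j⟩ |>.ne'
  rw [dft_conjTranspose_apply, norm_mul, norm_pow, ((isPrimitiveRoot_exp D hD).norm'_eq_one hD)]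
  simp

lemma dft_conjTranspose_conjTranspose_mul_self (D : ℕ) : (dft D)ᴴᴴ * (dft D)ᴴ = 1 := by
  rcases eq_or_ne D 0 with rfl | hD
  · exact Subsingleton.elim _ _
  set ζ := exp (2 * π * I / D)
  have hζ : IsPrimitiveRoot ζ D := isPrimitiveRoot_exp D hD
  have hstar : star ζ = ζ⁻¹ := (inv_eq_conj (hζ.norm'_eq_one hD)).symm
  have hc : (((√D)⁻¹ : ℝ) : ℂ) * (((√D)⁻¹ : ℝ) : ℂ) = (D : ℂ)⁻¹ := by
    rw [← ofReal_mul, ← mul_inv, Real.mul_self_sqrt D.cast_nonneg]; push_cast; rfl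
  ext j l
  set x := ζ ^ (l : ℕ) / ζ ^ (j : ℕ)
  have hx : x ^ D = 1 := by
    rw [div_pow, ← pow_mul, ← pow_mul, mul_comm, pow_mul, hζ.pow_eq_one, mul_comm (j : ℕ),
      pow_mul, hζ.pow_eq_one, one_pow, one_pow, div_one]
  calc ((dft D)ᴴᴴ * (dft D)ᴴ) j l = (D : ℂ)⁻¹ * ∑ k ∈ range D, x ^ k := by
        rw [Matrix.mul_apply, mul_sum, ← Fin.sum_univ_eq_sum_range]
        refine sum_congr rfl fun k _ => ?_
        rw [Matrix.conjTranspose_apply, dft_conjTranspose_apply, dft_conjTranspose_apply,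
          star_mul', star_pow, hstar, Complex.star_def, conj_ofReal, mul_mul_mul_comm, hc]
        ring
    _ = (1 : Matrix (Fin D) (Fin D) ℂ) j l := by
        rcases eq_or_ne j l with rfl | hjl
        · simp [x, hζ.ne_zero hD, hD]
        · have hx1 : x ≠ 1 := fun h => hjl <| Fin.ext <| hζ.pow_inj j.2 l.2 <|
            (div_eq_one_iff_eq (pow_ne_zero _ (hζ.ne_zero hD))).mp h |>.symm
          simp [geom_sum_eq hx1, hx, hjl]

section PNorm

variable {ι : Type*} [Fintype ι]

noncomputable def pNorm (p : ℝ) (v : ι → ℂ) : ℝ := (∑ i, ‖v i‖ ^ p) ^ p⁻¹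

lemma sum_norm_rpow_nonneg (p : ℝ) (v : ι → ℂ) : 0 ≤ ∑ i, ‖v i‖ ^ p :=
  sum_nonneg fun _ _ => by positivity

lemma pNorm_nonneg (p : ℝ) (v : ι → ℂ) : 0 ≤ pNorm p v := by
  unfold pNorm; positivity

lemma pNorm_rpow {p : ℝ} (hp : p ≠ 0) (v : ι → ℂ) : pNorm p v ^ p = ∑ i, ‖v i‖ ^ p := by
  rw [pNorm, ← Real.rpow_mul (sum_norm_rpow_nonneg p v), inv_mul_cancel₀ hp, Real.rpow_one]

lemma pNorm_eq_one_iff {p : ℝ} (hp : p ≠ 0) {v : ι → ℂ} :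
    pNorm p v = 1 ↔ ∑ i, ‖v i‖ ^ p = 1 := by
  rw [pNorm, Real.rpow_inv_eq (sum_norm_rpow_nonneg p v) zero_le_one hp, Real.one_rpow]

lemma sum_norm_rpow_pos {v : ι → ℂ} (hv : v ≠ 0) (p : ℝ) : 0 < ∑ i, ‖v i‖ ^ p := by
  obtain ⟨i, hi⟩ := Function.ne_iff.mp hv
  exact sum_pos' (fun _ _ => by positivity)
    ⟨i, mem_univ _, Real.rpow_pos_of_pos (norm_pos_iff.mpr hi) p⟩

lemma pNorm_pos {p : ℝ} {v : ι → ℂ} (hv : v ≠ 0) : 0 < pNorm p v :=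
  Real.rpow_pos_of_pos (sum_norm_rpow_pos hv p) _

lemma pNorm_smul {p : ℝ} (hp : p ≠ 0) (c : ℂ) (v : ι → ℂ) :
    pNorm p (c • v) = ‖c‖ * pNorm p v := by
  simp only [pNorm, Pi.smul_apply, smul_eq_mul, norm_mul,
    Real.mul_rpow (norm_nonneg _) (norm_nonneg _), ← mul_sum]
  rw [Real.mul_rpow (by positivity) (sum_norm_rpow_nonneg p v), ← Real.rpow_mul (norm_nonneg _),
    mul_inv_cancel₀ hp, Real.rpow_one]

lemma pNorm_zero {p : ℝ} (hp : p ≠ 0) : pNorm p (0 : ι → ℂ) = 0 := by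
  simpa using pNorm_smul hp 0 (0 : ι → ℂ)

lemma exists_pNorm_eq_one_and_sum_mul_eq_pNorm {p q : ℝ} (hpq : p.HolderConjugate q)
    {u : ι → ℂ} (hu : u ≠ 0) :
    ∃ x : ι → ℂ, pNorm p x = 1 ∧ ∑ i, x i * u i = pNorm q u := by
  set N := pNorm q u
  have hN : 0 < N := pNorm_pos hu
  have hq1 : q - 1 ≠ 0 := hpq.symm.sub_one_ne_zero
  have hq : q ≠ 0 := hpq.symm.left_pos.ne'
  have hsum : ∑ i, (‖u i‖ / N) ^ q = 1 := by
    simp_rw [Real.div_rpow (norm_nonneg _) hN.le]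
    rw [← sum_div, ← pNorm_rpow hq, div_self (by positivity)]
  have hpow₁ : ∀ a : ℝ, 0 ≤ a → a * a ^ (q - 2) = a ^ (q - 1) := fun a ha => by
    rw [← Real.rpow_one_add' ha (by convert hq1 using 1; ring)]
    ring_nf
  have hpow₂ : ∀ a : ℝ, 0 ≤ a → a ^ 2 * a ^ (q - 2) = a ^ q := fun a ha => by
    rw [← Real.rpow_natCast, ← Real.rpow_add' ha (by simpa using hq)]
    ring_nf
  refine ⟨fun i => conj (u i) * ((‖u i‖ / N) ^ (q - 2) / N : ℝ), ?_, ?_⟩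
  · rw [pNorm_eq_one_iff hpq.left_pos.ne', ← hsum]
    refine sum_congr rfl fun i _ => ?_
    have ha : 0 ≤ ‖u i‖ / N := by positivity
    rw [norm_mul, RCLike.norm_conj, norm_real, Real.norm_of_nonneg (by positivity),
      show ‖u i‖ * ((‖u i‖ / N) ^ (q - 2) / N) = ‖u i‖ / N * (‖u i‖ / N) ^ (q - 2) by ring,
      hpow₁ _ ha, ← Real.rpow_mul ha, hpq.symm.sub_one_mul_conj]
  · have hterm : ∀ i, conj (u i) * (((‖u i‖ / N) ^ (q - 2) / N : ℝ) : ℂ) * u i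
        = ((N * (‖u i‖ / N) ^ q : ℝ) : ℂ) := fun i => by
      have ha : 0 ≤ ‖u i‖ / N := by positivity
      rw [mul_right_comm, conj_mul', ← ofReal_pow, ← ofReal_mul, ← hpow₂ _ ha]
      congr 1
      field_simp
    rw [sum_congr rfl fun i _ => hterm i, ← ofReal_sum, ← mul_sum, hsum, mul_one]

end PNorm

section Interpolation

/-- `sgn u · |u| ^ (p (1 + z) / 2)`, written through `exp ∘ log` so that it is entire in `z`;
it vanishes at `u = 0` because `0 / ‖0‖ = 0`. -/
noncomputable def rieszThorinPow (p : ℝ) (u z : ℂ) : ℂ :=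
  u / ‖u‖ * exp (p / 2 * (1 + z) * Real.log ‖u‖)

@[fun_prop]
lemma differentiable_rieszThorinPow (p : ℝ) (u : ℂ) :
    Differentiable ℂ (rieszThorinPow p u) := by
  unfold rieszThorinPow; fun_prop

lemma norm_rieszThorinPow {p : ℝ} (hp : 0 < p) (u : ℂ) {z : ℂ} (hz : 0 ≤ z.re) :
    ‖rieszThorinPow p u z‖ = ‖u‖ ^ (p / 2 * (1 + z.re)) := by
  rcases eq_or_ne u 0 with rfl | hu
  · simp [rieszThorinPow, Real.zero_rpow (by positivity : p / 2 * (1 + z.re) ≠ 0)]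
  · rw [rieszThorinPow, norm_mul, norm_div, norm_real, norm_norm,
      div_self (norm_ne_zero_iff.mpr hu), one_mul, norm_exp,
      Real.rpow_def_of_pos (norm_pos_iff.mpr hu)]
    simp [mul_comm]

lemma rieszThorinPow_ofReal {p t : ℝ} (h : p / 2 * (1 + t) = 1) (u : ℂ) :
    rieszThorinPow p u t = u := by
  rcases eq_or_ne u 0 with rfl | hu
  · simp [rieszThorinPow]
  · have h' : (p / 2 * (1 + t) : ℂ) = 1 := by exact_mod_cast h
    rw [rieszThorinPow, h', one_mul, ← ofReal_exp, Real.exp_log (norm_pos_iff.mpr hu),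
      div_mul_cancel₀ _ (by simpa using hu)]

lemma rpow_le_rpow_add_rpow {x a s b : ℝ} (hx : 0 ≤ x) (ha : 0 ≤ a) (has : a ≤ s)
    (hsb : s ≤ b) : x ^ s ≤ x ^ a + x ^ b := by
  rcases le_total x 1 with hx1 | hx1
  · linarith [Real.rpow_le_rpow_of_exponent_ge' hx hx1 ha has, Real.rpow_nonneg hx b]
  · linarith [Real.rpow_le_rpow_of_exponent_le hx1 hsb, Real.rpow_nonneg hx a]

lemma norm_rieszThorinPow_le {p : ℝ} (hp : 0 < p) (u : ℂ) {z : ℂ}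
    (hz : z.re ∈ Set.Icc 0 1) : ‖rieszThorinPow p u z‖ ≤ ‖u‖ ^ (p / 2) + ‖u‖ ^ p := by
  rw [norm_rieszThorinPow hp u hz.1]
  exact rpow_le_rpow_add_rpow (norm_nonneg u) (by positivity) (by nlinarith [hz.1])
    (by nlinarith [hz.2])

lemma sum_norm_rieszThorinPow_sq {ι : Type*} [Fintype ι] {p : ℝ} (hp : 0 < p) (u : ι → ℂ)
    {z : ℂ} (hz : z.re = 0) : ∑ i, ‖rieszThorinPow p (u i) z‖ ^ 2 = ∑ i, ‖u i‖ ^ p := by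
  refine sum_congr rfl fun i _ => ?_
  rw [norm_rieszThorinPow hp _ hz.ge, hz, ← Real.rpow_natCast,
    ← Real.rpow_mul (norm_nonneg _)]
  ring_nf

lemma sum_norm_rieszThorinPow {ι : Type*} [Fintype ι] {p : ℝ} (hp : 0 < p) (u : ι → ℂ)
    {z : ℂ} (hz : z.re = 1) : ∑ i, ‖rieszThorinPow p (u i) z‖ = ∑ i, ‖u i‖ ^ p := by
  refine sum_congr rfl fun i _ => ?_
  rw [norm_rieszThorinPow hp _ (hz ▸ zero_le_one), hz]
  ring_nf

end Interpolation

section RieszThorin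

variable {m n : Type*} [Fintype m] [Fintype n]

lemma norm_sum_mul_le_sqrt_mul_sqrt (x y : m → ℂ) :
    ‖∑ i, x i * y i‖ ≤ √(∑ i, ‖x i‖ ^ 2) * √(∑ i, ‖y i‖ ^ 2) :=
  calc ‖∑ i, x i * y i‖ ≤ ∑ i, ‖x i‖ * ‖y i‖ :=
        (norm_sum_le _ _).trans_eq (by simp only [norm_mul])
    _ ≤ _ := Real.sum_mul_le_sqrt_mul_sqrt _ _ _

lemma norm_sum_mul_mulVec_le {A : Matrix m n ℂ} {M : ℝ} (hA : ∀ j k, ‖A j k‖ ≤ M)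
    (x : m → ℂ) (v : n → ℂ) :
    ‖∑ j, x j * (A *ᵥ v) j‖ ≤ M * ((∑ j, ‖x j‖) * ∑ k, ‖v k‖) := by
  have hrow : ∀ j, ‖(A *ᵥ v) j‖ ≤ M * ∑ k, ‖v k‖ := fun j =>
    calc ‖(A *ᵥ v) j‖ ≤ ∑ k, ‖A j k‖ * ‖v k‖ :=
          (norm_sum_le _ _).trans_eq (by simp only [norm_mul])
      _ ≤ ∑ k, M * ‖v k‖ := by gcongr with k; exact hA j k
      _ = M * ∑ k, ‖v k‖ := (mul_sum ..).symm
  calc ‖∑ j, x j * (A *ᵥ v) j‖ ≤ ∑ j, ‖x j‖ * ‖(A *ᵥ v) j‖ :=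
        (norm_sum_le _ _).trans_eq (by simp only [norm_mul])
    _ ≤ ∑ j, ‖x j‖ * (M * ∑ k, ‖v k‖) := by gcongr with j; exact hrow j
    _ = M * ((∑ j, ‖x j‖) * ∑ k, ‖v k‖) := by rw [← sum_mul]; ring

theorem norm_sum_mul_mulVec_le_rpow {A : Matrix m n ℂ} {M t : ℝ}
    (hA₂ : ∀ v, ∑ j, ‖(A *ᵥ v) j‖ ^ 2 ≤ ∑ k, ‖v k‖ ^ 2) (hA₁ : ∀ j k, ‖A j k‖ ≤ M)
    (ht : t ∈ Set.Icc 0 1) {x : m → ℂ} {v : n → ℂ}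
    (hx : pNorm (2 / (1 + t)) x = 1) (hv : pNorm (2 / (1 + t)) v = 1) :
    ‖∑ j, x j * (A *ᵥ v) j‖ ≤ M ^ t := by
  set p := 2 / (1 + t)
  have hp : 0 < p := by have := ht.1; positivity
  rw [pNorm_eq_one_iff hp.ne'] at hx hv
  let X (z : ℂ) (j : m) := rieszThorinPow p (x j) z
  let V (z : ℂ) (k : n) := rieszThorinPow p (v k) z
  let Φ (z : ℂ) := ∑ j, X z j * (A *ᵥ V z) j
  -- At `Re z = 0` both families are unit vectors of `ℓ²`, at `Re z = 1` of `ℓ¹`, and at `z = t`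
  -- they are `x` and `v`.
  have hΦ : Differentiable ℂ Φ := by
    simp only [Φ, X, V, Matrix.mulVec, dotProduct]
    fun_prop
  have hbound₀ (z : ℂ) (hz : z.re = 0) : ‖Φ z‖ ≤ 1 :=
    calc ‖Φ z‖ ≤ √(∑ j, ‖X z j‖ ^ 2) * √(∑ j, ‖(A *ᵥ V z) j‖ ^ 2) :=
          norm_sum_mul_le_sqrt_mul_sqrt _ _
      _ ≤ √(∑ j, ‖X z j‖ ^ 2) * √(∑ k, ‖V z k‖ ^ 2) := by gcongr; exact hA₂ _
      _ = 1 := by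
          simp only [X, V]
          rw [sum_norm_rieszThorinPow_sq hp x hz, sum_norm_rieszThorinPow_sq hp v hz, hx, hv,
            Real.sqrt_one, one_mul]
  have hbound₁ (z : ℂ) (hz : z.re = 1) : ‖Φ z‖ ≤ M :=
    (norm_sum_mul_mulVec_le hA₁ _ _).trans_eq <| by
      simp only [X, V]
      rw [sum_norm_rieszThorinPow hp x hz, sum_norm_rieszThorinPow hp v hz, hx, hv, one_mul,
        mul_one]
  have hbdd : BddAbove ((norm ∘ Φ) '' Complex.HadamardThreeLines.verticalClosedStrip 0 1) := by
    refine ⟨|M| * ((∑ j, (‖x j‖ ^ (p / 2) + ‖x j‖ ^ p)) * ∑ k, (‖v k‖ ^ (p / 2) + ‖v k‖ ^ p)),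
      ?_⟩
    rintro _ ⟨z, hz, rfl⟩
    refine (norm_sum_mul_mulVec_le hA₁ _ _).trans (mul_le_mul (le_abs_self M) ?_ (by positivity)
      (abs_nonneg M))
    gcongr with j _ k _
    · exact norm_rieszThorinPow_le hp _ hz
    · exact norm_rieszThorinPow_le hp _ hz
  have hmem : (t : ℂ) ∈ Complex.HadamardThreeLines.verticalClosedStrip 0 1 := by
    simpa [Complex.HadamardThreeLines.verticalClosedStrip] using ht
  have hΦt : Φ t = ∑ j, x j * (A *ᵥ v) j := by
    have hpt : p / 2 * (1 + t) = 1 := by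
      simp only [p]; field_simp [show 1 + t ≠ 0 by linarith [ht.1]]
    simp only [Φ, X, V, rieszThorinPow_ofReal hpt]
  simpa [hΦt] using
    Complex.HadamardThreeLines.norm_le_interp_of_mem_verticalClosedStrip₀₁' Φ hmem
      hΦ.diffContOnCl hbdd hbound₀ hbound₁

theorem pNorm_mulVec_le {A : Matrix m n ℂ} {M t : ℝ}
    (hA₂ : ∀ v, ∑ j, ‖(A *ᵥ v) j‖ ^ 2 ≤ ∑ k, ‖v k‖ ^ 2) (hA₁ : ∀ j k, ‖A j k‖ ≤ M)
    (hM : 0 ≤ M) (ht₀ : 0 ≤ t) (ht₁ : t < 1) (v : n → ℂ) :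
    pNorm (2 / (1 - t)) (A *ᵥ v) ≤ M ^ t * pNorm (2 / (1 + t)) v := by
  set p := 2 / (1 + t)
  set q := 2 / (1 - t)
  have hpq : p.HolderConjugate q := by
    convert Real.HolderConjugate.inv_inv (a := (1 + t) / 2) (b := (1 - t) / 2)
      (by linarith) (by linarith) (by ring) using 1 <;> simp [p, q]
  rcases eq_or_ne v 0 with rfl | hv
  · simp [pNorm_zero hpq.left_pos.ne', pNorm_zero hpq.symm.left_pos.ne']
  set N := pNorm p v
  have hN : 0 < N := pNorm_pos hv
  have hv' : pNorm p ((N⁻¹ : ℂ) • v) = 1 := by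
    rw [pNorm_smul hpq.left_pos.ne', norm_inv, norm_real, Real.norm_of_nonneg hN.le,
      inv_mul_cancel₀ hN.ne']
  suffices pNorm q (A *ᵥ (N⁻¹ : ℂ) • v) ≤ M ^ t by
    rwa [Matrix.mulVec_smul, pNorm_smul hpq.symm.left_pos.ne', norm_inv, norm_real,
      Real.norm_of_nonneg hN.le, inv_mul_le_iff₀ hN, mul_comm] at this
  rcases eq_or_ne (A *ᵥ (N⁻¹ : ℂ) • v) 0 with h | h
  · rw [h, pNorm_zero hpq.symm.left_pos.ne']
    positivity
  obtain ⟨x, hx, hxu⟩ := exists_pNorm_eq_one_and_sum_mul_eq_pNorm hpq h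
  have := norm_sum_mul_mulVec_le_rpow hA₂ hA₁ ⟨ht₀, ht₁.le⟩ hx hv'
  rwa [hxu, norm_real, Real.norm_of_nonneg (pNorm_nonneg _ _)] at this

lemma norm_eq_one_of_mulVec_eq_smul [DecidableEq n] {A : Matrix n n ℂ} (hA : Aᴴ * A = 1)
    {v : n → ℂ} (hv : v ≠ 0) {c : ℂ} (h : A *ᵥ v = c • v) : ‖c‖ = 1 := by
  have hS : 0 < ∑ k, ‖v k‖ ^ 2 := by
    obtain ⟨k, hk⟩ := Function.ne_iff.mp hv
    exact sum_pos' (fun _ _ => by positivity)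
      ⟨k, mem_univ _, pow_pos (norm_pos_iff.mpr hk) 2⟩
  have := sum_norm_sq_mulVec_of_conjTranspose_mul_self hA v
  simp only [h, Pi.smul_apply, smul_eq_mul, norm_mul, mul_pow, ← mul_sum] at this
  have hc : ‖c‖ ^ 2 = 1 := mul_right_cancel₀ hS.ne' (this.trans (one_mul _).symm)
  exact (pow_eq_one_iff_of_nonneg (norm_nonneg c) two_ne_zero).mp hc

end RieszThorin

lemma dft_eigenvector_pNorm_le {D : ℕ} {w : Fin D → ℂ} {lam : ℂ}
    (heig : (dft D)ᴴ *ᵥ w = lam • w) (hlam : ‖lam‖ = 1) {t : ℝ} (ht₀ : 0 ≤ t) (ht₁ : t < 1) :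
    pNorm (2 / (1 - t)) w ≤ (√D)⁻¹ ^ t * pNorm (2 / (1 + t)) w := by
  have := pNorm_mulVec_le
    (fun v => (sum_norm_sq_mulVec_of_conjTranspose_mul_self
      (dft_conjTranspose_conjTranspose_mul_self D) v).le)
    (fun j k => (norm_dft_conjTranspose_apply j k).le) (by positivity) ht₀ ht₁ w
  rwa [heig, pNorm_smul (div_ne_zero two_ne_zero (sub_pos.mpr ht₁).ne'), hlam, one_mul] at this

section Entropy

variable {ι : Type*} [Fintype ι]

lemma log_pNorm {v : ι → ℂ} (hv : v ≠ 0) (p : ℝ) :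
    Real.log (pNorm p v) = p⁻¹ * Real.log (∑ i, (‖v i‖ ^ 2) ^ (p / 2)) := by
  rw [pNorm, Real.log_rpow (sum_norm_rpow_pos hv p)]
  congr 3 with i
  rw [← Real.rpow_natCast, ← Real.rpow_mul (norm_nonneg _)]
  ring_nf

lemma hasDerivAt_const_rpow_of_nonneg {c x : ℝ} (hc : 0 ≤ c) (hx : x ≠ 0) :
    HasDerivAt (fun s : ℝ => c ^ s) (c ^ x * Real.log c) x := by
  rcases hc.eq_or_lt with rfl | hc
  · simpa using (hasDerivAt_const x (0 : ℝ)).congr_of_eventuallyEq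
      ((eventually_ne_nhds hx).mono fun s hs => Real.zero_rpow hs)
  · exact (Real.hasStrictDerivAt_const_rpow hc x).hasDerivAt

lemma hasDerivAt_log_sum_rpow {P : ι → ℝ} (hP : ∀ i, 0 ≤ P i) (hP₁ : ∑ i, P i = 1) :
    HasDerivAt (fun s : ℝ => Real.log (∑ i, P i ^ s)) (∑ i, P i * Real.log (P i)) 1 := by
  have hsum : HasDerivAt (fun s : ℝ => ∑ i, P i ^ s) (∑ i, P i ^ (1 : ℝ) * Real.log (P i)) 1 :=
    HasDerivAt.fun_sum fun i _ => hasDerivAt_const_rpow_of_nonneg (hP i) one_ne_zero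
  simpa [hP₁] using hsum.log (by simp [hP₁])

lemma hasDerivAt_log_pNorm {v : ι → ℂ} (hv : ∑ i, ‖v i‖ ^ 2 = 1) (a : ℝ) :
    HasDerivAt (fun t => Real.log (pNorm (2 / (1 + a * t)) v))
      (a / 2 * -∑ i, ‖v i‖ ^ 2 * Real.log (‖v i‖ ^ 2)) 0 := by
  have hv₀ : v ≠ 0 := by rintro rfl; simp at hv
  set ℓ := fun s : ℝ => Real.log (∑ i, (‖v i‖ ^ 2) ^ s)
  have hℓ := hasDerivAt_log_sum_rpow (P := fun i => ‖v i‖ ^ 2) (fun i => by positivity) hv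
  have hu : HasDerivAt (fun t : ℝ => 1 + a * t) a 0 := by
    simpa using ((hasDerivAt_id (0 : ℝ)).const_mul a).const_add 1
  have hinv : HasDerivAt (fun t : ℝ => (1 + a * t)⁻¹) (-a) 0 := by
    simpa [Function.comp_def] using (hasDerivAt_inv one_ne_zero).comp_of_eq 0 hu (by simp)
  have hcomp : HasDerivAt (fun t => ℓ (1 + a * t)⁻¹)
      ((∑ i, ‖v i‖ ^ 2 * Real.log (‖v i‖ ^ 2)) * -a) 0 :=
    hℓ.comp_of_eq 0 hinv (by simp)
  have hfun : (fun t => Real.log (pNorm (2 / (1 + a * t)) v))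
      = (fun t => (1 + a * t) / 2) * fun t => ℓ (1 + a * t)⁻¹ := by
    funext t
    rw [Pi.mul_apply, log_pNorm hv₀, inv_div, div_right_comm, div_self two_ne_zero, one_div]
  rw [hfun]
  refine ((hu.div_const 2).mul hcomp).congr_deriv ?_
  simp [ℓ, hv]
  ring

lemma HasDerivAt.nonpos_of_eventually_le_right {g : ℝ → ℝ} {g' a : ℝ}
    (hg : HasDerivAt g g' a) (h : ∀ᶠ t in 𝓝[>] a, g t ≤ g a) : g' ≤ 0 := by
  refine le_of_tendsto ((hasDerivAt_iff_tendsto_slope.mp hg).mono_left (nhdsGT_le_nhdsNE a)) ?_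
  filter_upwards [h, self_mem_nhdsWithin] with t ht hta
  rw [slope_def_field]
  exact div_nonpos_of_nonpos_of_nonneg (sub_nonpos.mpr ht) (sub_nonneg.mpr (le_of_lt hta))

end Entropy

/-- Any normalized eigenvector `w ∈ ℂ^D` of the inverse discrete Fourier transform `F_D^*`
has Shannon entropy `h(w) = -∑ |w_ε|² log |w_ε|²` at least `(log D)/2`. -/
theorem dft_eigenvector_entropy {D : ℕ} (w : Fin D → ℂ)
    (hw : ∑ j, ‖w j‖ ^ 2 = 1) (lam : ℂ)
    (heig : (dft D)ᴴ.mulVec w = lam • w) :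
    Real.log D / 2 ≤ -∑ j, ‖w j‖ ^ 2 * Real.log (‖w j‖ ^ 2) := by
  have hw₀ : w ≠ 0 := by rintro rfl; simp at hw
  obtain ⟨j₀, -⟩ := Function.ne_iff.mp hw₀
  have hD : (0 : ℝ) < D := Nat.cast_pos.mpr j₀.pos
  have hlam : ‖lam‖ = 1 :=
    norm_eq_one_of_mulVec_eq_smul (dft_conjTranspose_conjTranspose_mul_self D) hw₀ heig
  set h := -∑ j, ‖w j‖ ^ 2 * Real.log (‖w j‖ ^ 2)
  let g (t : ℝ) :=
    Real.log (pNorm (2 / (1 + -1 * t)) w) - Real.log (pNorm (2 / (1 + 1 * t)) w)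
      - t * Real.log (√D)⁻¹
  have hg : HasDerivAt g (-1 / 2 * h - 1 / 2 * h - 1 * Real.log (√D)⁻¹) 0 :=
    ((hasDerivAt_log_pNorm hw (-1)).sub (hasDerivAt_log_pNorm hw 1)).sub
      ((hasDerivAt_id 0).mul_const _)
  have hg_le : ∀ t ∈ Set.Ioo (0 : ℝ) 1, g t ≤ g 0 := by
    intro t ht
    have hHY :=
      Real.log_le_log (pNorm_pos hw₀) (dft_eigenvector_pNorm_le heig hlam ht.1.le ht.2)
    rw [Real.log_mul (by positivity) (pNorm_pos hw₀).ne', Real.log_rpow (by positivity)] at hHY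
    simp only [g]
    ring_nf at hHY ⊢
    linarith
  have := hg.nonpos_of_eventually_le_right <| by
    filter_upwards [Ioo_mem_nhdsGT zero_lt_one] using hg_le
  rw [Real.log_inv, Real.log_sqrt (Nat.cast_nonneg D)] at this
  linarith
end

section
/- For the Walsh-quantized baker B_k on (ℂ^D)^{⊗k}, defined by B_k(v^{(1)} ⊗ … ⊗ v^{(k)}) = v^{(2)} ⊗ … ⊗ v^{(k)} ⊗ F* v^{(1)}, the 2k-th power equals the tensor product of parity operators: (B_k)^{2k} = Π ⊗ Π ⊗ … ⊗ Π, where Π e_ε = e_{-ε mod D}. Consequently (B_k)^{4k} = I; and when D = 2, (B_k)^{2k} = I. -/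
open scoped BigOperators Matrix

/-- The elementary tensor `v⁽¹⁾ ⊗ … ⊗ v⁽ᵏ⁾` in `(ℂ^D)^{⊗k}`. -/
noncomputable def tensorVec (D k : ℕ) (v : Fin k → Fin D → ℂ) :
    EuclideanSpace ℂ (Fin k → Fin D) :=
  WithLp.toLp 2 (fun s => ∏ i, v i (s i))

/-- The parity matrix `Π` on `ℂ^D`, sending `e_ε` to `e_{-ε mod D}`. -/
def parityMatrix (D : ℕ) [NeZero D] : Matrix (Fin D) (Fin D) ℂ :=
  fun a b => if a = -b then 1 else 0

lemma fin_neg_iff {D : ℕ} [NeZero D] (a b : Fin D) :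
    a = -b ↔ D ∣ (a : ℕ) + (b : ℕ) := by
  rw [eq_neg_iff_add_eq_zero, Fin.ext_iff, Fin.val_add, Fin.val_zero,
    Nat.dvd_iff_mod_eq_zero]

lemma dftH_sq (D : ℕ) [NeZero D] : (dft D)ᴴ * (dft D)ᴴ = parityMatrix D := by
  have hDc : (D : ℂ) ≠ 0 := Nat.cast_ne_zero.2 (NeZero.ne D)
  have hI : (2 : ℂ) * (Real.pi : ℂ) * Complex.I ≠ 0 := by
    simp [Real.pi_ne_zero, Complex.I_ne_zero, Complex.ofReal_ne_zero]
  ext a b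
  have hconj : ∀ j l : Fin D, (dft D)ᴴ j l =
      ((1 / Real.sqrt D : ℝ) : ℂ) *
        Complex.exp (2 * Real.pi * Complex.I * ((j : ℕ) : ℂ) * ((l : ℕ) : ℂ) / (D : ℂ)) := by
    intro j l
    simp only [Matrix.conjTranspose_apply, dft, Complex.star_def, map_mul, map_div₀,
      Complex.conj_ofReal, ← Complex.exp_conj, map_neg, Complex.conj_I, Complex.conj_natCast,
      map_ofNat, map_natCast]
    ring_nf
  have key : ∀ j : Fin D, (dft D)ᴴ a j * (dft D)ᴴ j b =
      (1 / (D : ℂ)) * Complex.exp (2 * Real.pi * Complex.I * (((a : ℕ) + (b : ℕ) : ℕ) : ℂ) / (D : ℂ)) ^ (j : ℕ) := by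
    intro j
    rw [hconj, hconj, ← Complex.exp_nat_mul]
    have hr : ((1 / Real.sqrt D : ℝ) : ℂ) * ((1 / Real.sqrt D : ℝ) : ℂ) = 1 / (D : ℂ) := by
      rw [← Complex.ofReal_mul, div_mul_div_comm, one_mul,
        Real.mul_self_sqrt (Nat.cast_nonneg D)]
      simp
    rw [mul_mul_mul_comm, hr, ← Complex.exp_add]
    congr 1
    push_cast
    ring
  rw [Matrix.mul_apply]
  simp only [key]
  rw [← Finset.mul_sum, Fin.sum_univ_eq_sum_range (fun j => _ ^ j)]
  set e := Complex.exp (2 * Real.pi * Complex.I * (((a : ℕ) + (b : ℕ) : ℕ) : ℂ) / (D : ℂ)) with he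
  have heD : e ^ D = 1 := by
    rw [he, ← Complex.exp_nat_mul]
    have h3 : (D : ℂ) * (2 * Real.pi * Complex.I * (((a : ℕ) + (b : ℕ) : ℕ) : ℂ) / (D : ℂ))
        = (((a : ℕ) + (b : ℕ) : ℕ) : ℂ) * (2 * Real.pi * Complex.I) := by
      field_simp
    rw [h3]
    exact_mod_cast Complex.exp_int_mul_two_pi_mul_I ((a : ℕ) + (b : ℕ) : ℤ)
  by_cases hab : a = -b
  · obtain ⟨m, hm⟩ := (fin_neg_iff a b).1 hab
    have he1 : e = 1 := by
      rw [he, hm]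
      have h3 : 2 * (Real.pi : ℂ) * Complex.I * ((D * m : ℕ) : ℂ) / (D : ℂ)
          = (m : ℂ) * (2 * Real.pi * Complex.I) := by
        push_cast; field_simp
      rw [h3]
      exact_mod_cast Complex.exp_int_mul_two_pi_mul_I (m : ℤ)
    simp only [he1, one_pow, Finset.sum_const, Finset.card_range, nsmul_eq_mul, mul_one]
    rw [one_div, inv_mul_cancel₀ hDc]
    simp [parityMatrix, hab]
  · have he1 : e ≠ 1 := by
      intro h
      rw [he, Complex.exp_eq_one_iff] at h
      obtain ⟨n, hn⟩ := h
      have h2 : (((a : ℕ) + (b : ℕ) : ℕ) : ℂ) * (2 * Real.pi * Complex.I)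
          = ((n : ℂ) * (D : ℂ)) * (2 * Real.pi * Complex.I) := by
        field_simp at hn
        push_cast at hn ⊢
        linear_combination (2 * (Real.pi : ℂ) * Complex.I) * hn
      have h4 : (((a : ℕ) + (b : ℕ) : ℕ) : ℂ) = ((n * D : ℤ) : ℂ) := by
        exact_mod_cast mul_right_cancel₀ hI h2
      have h5 : (((a : ℕ) + (b : ℕ) : ℕ) : ℤ) = n * D := by exact_mod_cast h4
      have h6 : (D : ℤ) ∣ (((a : ℕ) + (b : ℕ) : ℕ) : ℤ) := ⟨n, by rw [h5]; ring⟩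
      exact hab ((fin_neg_iff a b).2 (Int.natCast_dvd_natCast.mp h6))
    rw [geom_sum_eq he1, heD, sub_self, zero_div, mul_zero]
    simp [parityMatrix, hab]

lemma pow_tensor {D k : ℕ} [NeZero D] (hk : 0 < k)
    (B : EuclideanSpace ℂ (Fin k → Fin D) →ₗ[ℂ] EuclideanSpace ℂ (Fin k → Fin D))
    (hB : ∀ v : Fin k → Fin D → ℂ,
      B (tensorVec D k v) = tensorVec D k (fun i =>
        if h : (i : ℕ) + 1 < k then v ⟨(i : ℕ) + 1, h⟩ else (dft D)ᴴ.mulVec (v ⟨0, hk⟩)))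
    (n : ℕ) (hn : n ≤ k) (v : Fin k → Fin D → ℂ) :
    (B ^ n) (tensorVec D k v) = tensorVec D k (fun i =>
      if h : (i : ℕ) + n < k then v ⟨(i : ℕ) + n, h⟩
      else (dft D)ᴴ.mulVec (v ⟨(i : ℕ) + n - k, by have := i.isLt; omega⟩)) := by
  induction n generalizing v with
  | zero =>
    rw [pow_zero, Module.End.one_apply]
    refine congrArg _ (funext fun i => ?_)
    rw [dif_pos (by have := i.isLt; omega)]
    exact congrArg v (Fin.ext (by simp))
  | succ n ih =>
    rw [pow_succ, Module.End.mul_apply, hB v, ih (by omega)]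
    refine congrArg _ (funext fun i => ?_)
    have hik := i.isLt
    simp only []
    split_ifs with h1 h2 h3 h4 h5 h6 h7 <;>
      first
        | exact congrArg v (Fin.ext (by simp; omega))
        | exact congrArg _ (congrArg v (Fin.ext (by simp; omega)))
        | (exfalso; simp at *; omega)


lemma tensor_delta {D k : ℕ} [NeZero D] (s : Fin k → Fin D) :
    tensorVec D k (fun i ε => if ε = s i then (1 : ℂ) else 0) =
      WithLp.toLp 2 (fun t => if t = s then 1 else 0) := by
  ext t
  simp only [tensorVec, PiLp.toLp_apply]
  by_cases h : t = s
  · subst h; simp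
  · rw [if_neg h]
    obtain ⟨i, hi⟩ : ∃ i, t i ≠ s i := by
      by_contra hc; push_neg at hc; exact h (funext hc)
    exact Finset.prod_eq_zero (Finset.mem_univ i) (if_neg hi)

lemma parity_delta {D : ℕ} [NeZero D] (c : Fin D) :
    (parityMatrix D).mulVec (fun ε => if ε = c then (1 : ℂ) else 0) =
      (fun ε => if ε = -c then 1 else 0) := by
  funext a
  simp only [Matrix.mulVec, dotProduct, parityMatrix, mul_ite, mul_one, mul_zero]
  rw [Finset.sum_ite_eq' Finset.univ c (fun b => if a = -b then (1:ℂ) else 0)]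
  simp

/-- For the Walsh-quantized baker `B_k` on `(ℂ^D)^{⊗k}`, the `2k`-th power is the tensor
product of parity operators `Π ⊗ … ⊗ Π`; consequently `(B_k)^{4k} = I`, and when `D = 2`
already `(B_k)^{2k} = I`. -/
theorem walsh_baker_period {D k : ℕ} [NeZero D] (hk : 0 < k)
    (B : EuclideanSpace ℂ (Fin k → Fin D) →ₗ[ℂ] EuclideanSpace ℂ (Fin k → Fin D))
    (hB : ∀ v : Fin k → Fin D → ℂ,
      B (tensorVec D k v) = tensorVec D k (fun i =>
        if h : (i : ℕ) + 1 < k then v ⟨(i : ℕ) + 1, h⟩ else (dft D)ᴴ.mulVec (v ⟨0, hk⟩))) :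
    (∀ v : Fin k → Fin D → ℂ,
        (B ^ (2 * k)) (tensorVec D k v) =
          tensorVec D k (fun i => (parityMatrix D).mulVec (v i))) ∧
      (∀ ψ, (B ^ (4 * k)) ψ = ψ) ∧
      (D = 2 → ∀ ψ, (B ^ (2 * k)) ψ = ψ) := by
  have hBk : ∀ v, (B ^ k) (tensorVec D k v) =
      tensorVec D k (fun i => (dft D)ᴴ.mulVec (v i)) := by
    intro v
    rw [pow_tensor hk B hB k le_rfl v]
    refine congrArg _ (funext fun i => ?_)
    rw [dif_neg (by omega)]
    exact congrArg _ (congrArg v (Fin.ext (by simp)))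
  have h2k : ∀ v, (B ^ (2 * k)) (tensorVec D k v) =
      tensorVec D k (fun i => (parityMatrix D).mulVec (v i)) := by
    intro v
    rw [show 2 * k = k + k by ring, pow_add, Module.End.mul_apply, hBk, hBk]
    refine congrArg _ (funext fun i => ?_)
    rw [Matrix.mulVec_mulVec, dftH_sq]
  have hbasis : ∀ s : Fin k → Fin D,
      (B ^ (2 * k)) (WithLp.toLp 2 (fun t => if t = s then (1 : ℂ) else 0)) =
        WithLp.toLp 2 (fun t => if t = (fun i => -(s i)) then 1 else 0) := by
    intro s
    rw [← tensor_delta s, h2k]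
    calc tensorVec D k (fun i => (parityMatrix D).mulVec
            ((fun i ε => if ε = s i then (1:ℂ) else 0) i))
        = tensorVec D k (fun i ε => if ε = -(s i) then 1 else 0) :=
          congrArg _ (funext fun i => parity_delta (s i))
      _ = _ := tensor_delta (fun i => -(s i))
  have hbv : ∀ s : Fin k → Fin D, (PiLp.basisFun 2 ℂ (Fin k → Fin D)) s =
      WithLp.toLp 2 (fun t => if t = s then (1 : ℂ) else 0) := by
    intro s
    rw [PiLp.basisFun_apply]
    ext t
    simp [Pi.single_apply]
  refine ⟨h2k, ?_, ?_⟩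
  · have heq : B ^ (4 * k) = LinearMap.id := by
      refine (PiLp.basisFun 2 ℂ (Fin k → Fin D)).ext fun s => ?_
      rw [hbv s, LinearMap.id_apply, show 4 * k = 2 * k + 2 * k by ring, pow_add,
        Module.End.mul_apply, hbasis s, hbasis (fun i => -(s i))]
      simp
    intro ψ; rw [heq, LinearMap.id_apply]
  · intro hD
    subst hD
    have hneg : ∀ x : Fin 2, -x = x := by decide
    have heq : B ^ (2 * k) = LinearMap.id := by
      refine (PiLp.basisFun 2 ℂ (Fin k → Fin 2)).ext fun s => ?_
      rw [hbv s, LinearMap.id_apply, hbasis s]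
      simp [hneg]
    intro ψ; rw [heq, LinearMap.id_apply]
end

section
/- For n ≤ k and a sequence ε = ε₁…ε_n ∈ {0,…,D-1}^n, the refined quantum partition operator P_ε = P_{ε_n}(n-1) ∘ … ∘ P_{ε₁} on (ℂ^D)^{⊗k} equals the orthogonal projector π_{ε₁} ⊗ π_{ε₂} ⊗ … ⊗ π_{ε_n} ⊗ I^{⊗(k-n)}. In particular, the operators {P_ε : |ε| = n} are mutually orthogonal projectors summing to the identity. -/
open scoped BigOperators Matrix
open scoped BigOperators Matrix

/-- The Walsh-quantized baker `B_k` on `(ℂ^D)^{⊗k} ≅ ℂ^{D^k}`, as a matrix: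
`B_k(v⁽¹⁾ ⊗ … ⊗ v⁽ᵏ⁾) = v⁽²⁾ ⊗ … ⊗ v⁽ᵏ⁾ ⊗ F_D^* v⁽¹⁾`. -/
noncomputable def bakerMatrix (D k : ℕ) (hk : 0 < k) :
    Matrix (Fin k → Fin D) (Fin k → Fin D) ℂ :=
  fun s t => ∏ i : Fin k,
    if h : (i : ℕ) + 1 < k then (if s i = t ⟨(i : ℕ) + 1, h⟩ then 1 else 0)
    else ((dft D)ᴴ) (s i) (t ⟨0, hk⟩)

/-- The projector `P_ε = π_ε ⊗ I^{⊗(k-1)}` onto the cylinder `[·ε]`, `ε ∈ {0,…,D-1}`. -/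
noncomputable def cylProj (D k : ℕ) (hk : 0 < k) (a : Fin D) :
    Matrix (Fin k → Fin D) (Fin k → Fin D) ℂ :=
  fun s t => if s = t ∧ s ⟨0, hk⟩ = a then 1 else 0

/-- The evolved projector `P_ε(l) = B_k^{-l} P_ε B_k^{l}`. -/
noncomputable def cylProjAt (D k : ℕ) (hk : 0 < k) (a : Fin D) (l : ℕ) :
    Matrix (Fin k → Fin D) (Fin k → Fin D) ℂ :=
  (bakerMatrix D k hk)⁻¹ ^ l * cylProj D k hk a * (bakerMatrix D k hk) ^ l

/-- The refined quantum partition operator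
`P_ε = P_{ε_n}(n-1) ∘ … ∘ P_{ε₂}(1) ∘ P_{ε₁}` associated with a word `ε = ε₁…ε_n`. -/
noncomputable def wordOp (D k : ℕ) (hk : 0 < k) :
    (n : ℕ) → (Fin n → Fin D) → Matrix (Fin k → Fin D) (Fin k → Fin D) ℂ
  | 0, _ => 1
  | n + 1, ε => cylProjAt D k hk (ε (Fin.last n)) n * wordOp D k hk n (fun i => ε i.castSucc)


/-! `B_k` moves tensor slot `l + 1` to slot `l` and applies the unitary `F_D^*` only to the slot it
moves to the end, so `B_k π_a^{(l+1)} = π_a^{(l)} B_k` for `l + 1 < k`, where `π_a^{(l)}` projects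
slot `l` onto `e_a`. Since `B_k` is unitary, `P_a(l) = π_a^{(l)}` for every `l < k`. These
projectors are diagonal in the standard basis, so `P_ε` is the diagonal projector onto the basis
words starting with `ε`, i.e. onto a fibre of `s ↦ (s₀, …, s_{n-1})`; fibre projectors of one map
are mutually orthogonal and sum to the identity. -/

open Finset Complex Matrix

theorem dft_apply_eq_pow {D : ℕ} (j k : Fin D) :
    dft D j k = ((1 / Real.sqrt D : ℝ) : ℂ) * exp (-2 * Real.pi * I / D) ^ ((j : ℕ) * k) := by
  rw [dft, ← exp_nat_mul]
  push_cast
  ring_nf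

theorem sum_pow_eq_zero_of_pow_eq_one {K : Type*} [Field K] {ζ : K} {n : ℕ} (hζn : ζ ^ n = 1)
    (hζ : ζ ≠ 1) : ∑ i ∈ range n, ζ ^ i = 0 := by
  rw [geom_sum_eq hζ, hζn, sub_self, zero_div]

theorem conjTranspose_dft_mul_dft (D : ℕ) : (dft D)ᴴ * dft D = 1 := by
  rcases D.eq_zero_or_pos with rfl | hD
  · exact Subsingleton.elim _ _
  set ω := exp (-2 * Real.pi * I / D)
  have hω : IsPrimitiveRoot ω D := by
    have := (isPrimitiveRoot_exp D hD.ne').inv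
    rwa [← exp_neg, ← neg_div, ← neg_mul, ← neg_mul] at this
  have hω_star : star ω = ω⁻¹ := (inv_eq_conj (hω.norm'_eq_one hD.ne')).symm
  have hsqrt : ((1 / Real.sqrt D : ℝ) : ℂ) * ((1 / Real.sqrt D : ℝ) : ℂ) = (D : ℂ)⁻¹ := by
    rw [← ofReal_mul, div_mul_div_comm, one_mul, Real.mul_self_sqrt D.cast_nonneg]
    push_cast
    ring
  ext m m'
  set ζ := (ω ^ (m : ℕ))⁻¹ * ω ^ (m' : ℕ)
  have hterm : ∀ x : Fin D, (dft D)ᴴ m x * dft D x m' = (D : ℂ)⁻¹ * ζ ^ (x : ℕ) := by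
    intro x
    rw [conjTranspose_apply, dft_apply_eq_pow, dft_apply_eq_pow, star_mul', star_pow, hω_star,
      Complex.star_def, conj_ofReal, ← hsqrt]
    ring
  have hζD : ζ ^ D = 1 := by
    rw [mul_pow, inv_pow, ← pow_mul, ← pow_mul, mul_comm (m : ℕ), mul_comm (m' : ℕ), pow_mul,
      pow_mul, hω.pow_eq_one, one_pow, one_pow, inv_one, one_mul]
  have hζ : ζ = 1 ↔ m = m' := by
    rw [inv_mul_eq_one₀ (pow_ne_zero _ (hω.ne_zero hD.ne')), Fin.ext_iff]
    exact ⟨fun h => hω.pow_inj m.isLt m'.isLt h, fun h => h ▸ rfl⟩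
  rw [mul_apply, Finset.sum_congr rfl fun x _ => hterm x, ← mul_sum,
    Fin.sum_univ_eq_sum_range (fun i => ζ ^ i), one_apply]
  by_cases h : m = m'
  · simp [h, hζ.mpr h, hD.ne']
  · rw [sum_pow_eq_zero_of_pow_eq_one hζD (hζ.not.mpr h), if_neg h, mul_zero]

namespace Matrix

variable {ι α R : Type*} [Fintype ι] [CommSemiring R]

def piKronecker (A : ι → Matrix α α R) : Matrix (ι → α) (ι → α) R :=
  fun s t => ∏ i, A i (s i) (t i)

theorem piKronecker_mul [DecidableEq ι] [Fintype α] (A B : ι → Matrix α α R) :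
    piKronecker A * piKronecker B = piKronecker fun i => A i * B i := by
  ext s t
  simp only [piKronecker, mul_apply, ← Finset.prod_mul_distrib, Fintype.prod_sum]

theorem piKronecker_one [DecidableEq α] : piKronecker (fun _ : ι => (1 : Matrix α α R)) = 1 := by
  ext s t
  simp only [piKronecker, one_apply, Fintype.prod_boole, funext_iff]

theorem conjTranspose_piKronecker [StarRing R] (A : ι → Matrix α α R) :
    (piKronecker A)ᴴ = piKronecker fun i => (A i)ᴴ := by
  ext s t
  simp only [piKronecker, conjTranspose_apply, star_prod]

theorem piKronecker_mul_conjTranspose_self [DecidableEq ι] [Fintype α] [DecidableEq α]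
    [StarRing R] {A : ι → Matrix α α R} (hA : ∀ i, A i * (A i)ᴴ = 1) :
    piKronecker A * (piKronecker A)ᴴ = 1 := by
  rw [conjTranspose_piKronecker, piKronecker_mul, funext hA, piKronecker_one]

end Matrix

theorem val_finRotate {k : ℕ} (i : Fin k) :
    (finRotate k i : ℕ) = if (i : ℕ) + 1 < k then (i : ℕ) + 1 else 0 := by
  cases k with
  | zero => exact i.elim0
  | succ n =>
    rw [coe_finRotate]
    by_cases h : i = Fin.last n
    · simp [h]
    · rw [if_neg h, if_pos (Nat.succ_lt_succ (Fin.val_lt_last h))]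

noncomputable def bakerFactor (D k : ℕ) (i : Fin k) : Matrix (Fin D) (Fin D) ℂ :=
  if (i : ℕ) + 1 < k then 1 else (dft D)ᴴ

theorem bakerMatrix_eq_submatrix (D k : ℕ) (hk : 0 < k) :
    bakerMatrix D k hk = (piKronecker (bakerFactor D k)).submatrix id
      ((finRotate k).symm.arrowCongr (Equiv.refl (Fin D))) := by
  ext s t
  refine Finset.prod_congr rfl fun i _ => ?_
  by_cases h : (i : ℕ) + 1 < k
  · have hrot : finRotate k i = ⟨i + 1, h⟩ := Fin.ext (by rw [val_finRotate, if_pos h])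
    simp [bakerFactor, h, hrot, one_apply]
  · have hrot : finRotate k i = ⟨0, hk⟩ := Fin.ext (by rw [val_finRotate, if_neg h])
    simp [bakerFactor, h, hrot]

theorem bakerMatrix_mul_conjTranspose_self (D k : ℕ) (hk : 0 < k) :
    bakerMatrix D k hk * (bakerMatrix D k hk)ᴴ = 1 := by
  have hfactor : ∀ i, bakerFactor D k i * (bakerFactor D k i)ᴴ = 1 := fun i => by
    by_cases h : (i : ℕ) + 1 < k
    · simp [bakerFactor, h]
    · simp [bakerFactor, h, conjTranspose_dft_mul_dft]
  rw [bakerMatrix_eq_submatrix, conjTranspose_submatrix, submatrix_mul_equiv,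
    piKronecker_mul_conjTranspose_self hfactor, submatrix_id_id]

theorem inv_bakerMatrix_mul_self (D k : ℕ) (hk : 0 < k) :
    (bakerMatrix D k hk)⁻¹ * bakerMatrix D k hk = 1 := by
  have h := bakerMatrix_mul_conjTranspose_self D k hk
  rw [inv_eq_right_inv h, mul_eq_one_comm.mp h]

namespace Matrix

variable {X X' Y Z W R : Type*} [DecidableEq X] [DecidableEq Y] [Semiring R]

def fiberProj (f : X → Y) (y : Y) : Matrix X X R :=
  diagonal fun x => if f x = y then 1 else 0

theorem fiberProj_apply (f : X → Y) (y : Y) (s t : X) :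
    (fiberProj f y : Matrix X X R) s t = if s = t ∧ f s = y then 1 else 0 := by
  rw [fiberProj, diagonal_apply, ite_and]

theorem sum_fiberProj [Fintype Y] (f : X → Y) : ∑ y, (fiberProj f y : Matrix X X R) = 1 := by
  ext s t
  simp only [sum_apply, fiberProj_apply, one_apply]
  split_ifs with hst <;> simp [hst]

theorem fiberProj_mul_fiberProj_of_iff [Fintype X] [DecidableEq Z] [DecidableEq W] {f : X → Y}
    {g : X → Z} {h : X → W} {y : Y} {z : Z} {w : W} (hfgh : ∀ x, h x = w ↔ f x = y ∧ g x = z) :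
    (fiberProj f y * fiberProj g z : Matrix X X R) = fiberProj h w := by
  simp only [fiberProj, diagonal_mul_diagonal, ite_zero_mul_ite_zero, one_mul, hfgh]

theorem fiberProj_mul_fiberProj [Fintype X] (f : X → Y) (y y' : Y) :
    (fiberProj f y * fiberProj f y' : Matrix X X R) = if y = y' then fiberProj f y else 0 := by
  split_ifs with hy
  · exact fiberProj_mul_fiberProj_of_iff fun x => by rw [hy, and_self]
  · have hdisj : ∀ x, ¬(f x = y ∧ f x = y') := fun x hx => hy (hx.1.symm.trans hx.2)
    simp only [fiberProj, diagonal_mul_diagonal, ite_zero_mul_ite_zero, hdisj, if_false,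
      diagonal_zero]

theorem mul_fiberProj_eq_fiberProj_mul [Fintype X] [Fintype X'] [DecidableEq X']
    {M : Matrix X X' R} {f : X → Y} {g : X' → Y} (hM : ∀ s t, f s ≠ g t → M s t = 0) (y : Y) :
    M * (fiberProj g y : Matrix X' X' R) = (fiberProj f y : Matrix X X R) * M := by
  ext s t
  rw [fiberProj, fiberProj, mul_diagonal, diagonal_mul]
  by_cases hst : f s = g t
  · simp [hst]
  · simp [hM s t hst]

end Matrix

theorem bakerMatrix_apply_eq_zero {D k : ℕ} (hk : 0 < k) {l : ℕ} (hl : l + 1 < k)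
    (s t : Fin k → Fin D) (hst : s ⟨l, by omega⟩ ≠ t ⟨l + 1, hl⟩) : bakerMatrix D k hk s t = 0 :=
  Finset.prod_eq_zero (Finset.mem_univ ⟨l, by omega⟩) (by rw [dif_pos hl, if_neg hst])

theorem cylProjAt_eq_fiberProj {D k : ℕ} (hk : 0 < k) (a : Fin D) {l : ℕ} (hl : l < k) :
    cylProjAt D k hk a l = fiberProj (fun s => s ⟨l, hl⟩) a := by
  induction l with
  | zero =>
    ext s t
    rw [cylProjAt, pow_zero, pow_zero, Matrix.one_mul, Matrix.mul_one, fiberProj_apply]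
    rfl
  | succ l ih =>
    calc cylProjAt D k hk a (l + 1)
        = (bakerMatrix D k hk)⁻¹ * (cylProjAt D k hk a l * bakerMatrix D k hk) := by
          rw [cylProjAt, cylProjAt, pow_succ', pow_succ]
          simp only [Matrix.mul_assoc]
      _ = (bakerMatrix D k hk)⁻¹ *
            (bakerMatrix D k hk * fiberProj (fun s => s ⟨l + 1, hl⟩) a) := by
          rw [ih (by omega), mul_fiberProj_eq_fiberProj_mul (bakerMatrix_apply_eq_zero hk hl)]
      _ = fiberProj (fun s => s ⟨l + 1, hl⟩) a := by
          rw [← Matrix.mul_assoc, inv_bakerMatrix_mul_self, Matrix.one_mul]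

theorem wordOp_eq_fiberProj {D k n : ℕ} (hk : 0 < k) (hn : n ≤ k) (ε : Fin n → Fin D) :
    wordOp D k hk n ε = fiberProj (fun s i => s (Fin.castLE hn i)) ε := by
  induction n with
  | zero =>
    rw [wordOp, fiberProj, ← diagonal_one]
    simp [Subsingleton.elim _ ε]
  | succ n ih =>
    rw [wordOp, cylProjAt_eq_fiberProj hk _ hn, ih (by omega)]
    exact fiberProj_mul_fiberProj_of_iff fun s => by
      simp only [funext_iff, Fin.forall_fin_succ']
      exact and_comm

theorem wordOp_eq_tensor_projector_general {D k n : ℕ} (hk : 0 < k) (hn : n ≤ k)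
    (ε : Fin n → Fin D) :
    (wordOp D k hk n ε =
        fun s t => if s = t ∧ ∀ i : Fin n, s (Fin.castLE hn i) = ε i then (1 : ℂ) else 0) ∧
      (∑ ε' : Fin n → Fin D, wordOp D k hk n ε' = 1) ∧
      (∀ ε₁ ε₂ : Fin n → Fin D,
        wordOp D k hk n ε₁ * wordOp D k hk n ε₂ =
          if ε₁ = ε₂ then wordOp D k hk n ε₁ else 0) := by
  simp only [wordOp_eq_fiberProj hk hn]
  refine ⟨?_, sum_fiberProj _, fun ε₁ ε₂ => fiberProj_mul_fiberProj _ _ _⟩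
  ext s t
  simp only [fiberProj_apply, funext_iff]

/-- For `n ≤ k`, the refined quantum partition operator `P_ε` equals the orthogonal
projector `π_{ε₁} ⊗ … ⊗ π_{ε_n} ⊗ I^{⊗(k-n)}`; in particular the operators
`{P_ε : |ε| = n}` are mutually orthogonal projectors summing to the identity. -/
theorem wordOp_eq_tensor_projector {D k n : ℕ} (hD : 0 < D) (hk : 0 < k) (hn : n ≤ k)
    (ε : Fin n → Fin D) :
    (wordOp D k hk n ε =
        fun s t => if s = t ∧ ∀ i : Fin n, s (Fin.castLE hn i) = ε i then (1 : ℂ) else 0) ∧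
      (∑ ε' : Fin n → Fin D, wordOp D k hk n ε' = 1) ∧
      (∀ ε₁ ε₂ : Fin n → Fin D,
        wordOp D k hk n ε₁ * wordOp D k hk n ε₂ =
          if ε₁ = ε₂ then wordOp D k hk n ε₁ else 0) :=
  wordOp_eq_tensor_projector_general hk hn ε
end

section
/- For the Walsh anti-Wick quantization Op_{k,ℓ} and any two Lipschitz observables f, g on the symbolic space Σ, one has ‖Op_{k,ℓ}(fg) − Op_{k,ℓ}(f)Op_{k,ℓ}(g)‖ ≤ ‖f‖_Lip ‖g‖_Lip D^{-min(ℓ, k-ℓ)}. Moreover Op_{k,ℓ}(f̄) = Op_{k,ℓ}(f)* and tr Op_{k,ℓ}(f) = D^k ∫ f dx. -/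
open scoped BigOperators Classical Matrix
open MeasureTheory

/-- Distance between two one-sided symbol sequences: `D^{-n₀}` where `n₀` is the first
index of disagreement (and `0` if the sequences coincide). -/
noncomputable def seqDist (D : ℕ) (u v : ℕ → Fin D) : ℝ :=
  if u = v then 0 else (D : ℝ) ^ (-((sInf {n : ℕ | u n ≠ v n} : ℕ) : ℤ))

/-- The metric `d_Σ` on `Σ = Z_D^{ℕ*} × Z_D^{ℕ*}`; a point `x = (ε', ε)` consists of its
past sequence `x.1` and its future sequence `x.2`. -/
noncomputable def symbDist (D : ℕ) (x y : (ℕ → Fin D) × (ℕ → Fin D)) : ℝ :=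
  max (seqDist D x.1 y.1) (seqDist D x.2 y.2)

/-- The `D`-nary digit sequence of a real number `x`. -/
noncomputable def digitFun (D : ℕ) (hD : 0 < D) (x : ℝ) : ℕ → Fin D :=
  fun n => ⟨(⌊x * (D : ℝ) ^ (n + 1)⌋.toNat) % D, Nat.mod_lt _ hD⟩

/-- The uniform Bernoulli measure on one-sided sequences, realized as the image of
Lebesgue measure on `[0,1)` under the digit map. -/
noncomputable def digitMeasure (D : ℕ) (hD : 0 < D) : Measure (ℕ → Fin D) :=
  Measure.map (digitFun D hD) (volume.restrict (Set.Ico (0 : ℝ) 1))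

/-- The natural (Lebesgue) measure on the two-sided symbol space `Σ`. -/
noncomputable def symbMeasure (D : ℕ) (hD : 0 < D) :
    Measure ((ℕ → Fin D) × (ℕ → Fin D)) :=
  (digitMeasure D hD).prod (digitMeasure D hD)

/-- The quantum rectangle `[ε'·ε] ⊂ Σ` associated with words `ε` of length `ℓ` and `ε'`
of length `k - ℓ`. -/
def rectSet (D k ℓ : ℕ) (R : (Fin ℓ → Fin D) × (Fin (k - ℓ) → Fin D)) :
    Set ((ℕ → Fin D) × (ℕ → Fin D)) :=
  {x | (∀ i : Fin ℓ, x.2 (i : ℕ) = R.1 i) ∧ ∀ i : Fin (k - ℓ), x.1 (i : ℕ) = R.2 i}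

/-- The Walsh coherent state `|ε'·ε⟩ = e_{ε₁} ⊗ … ⊗ e_{ε_ℓ} ⊗ F* e_{ε'_{k-ℓ}} ⊗ … ⊗ F* e_{ε'₁}`
attached to a quantum rectangle. -/
noncomputable def coherent (D k ℓ : ℕ) (hℓ : ℓ ≤ k)
    (R : (Fin ℓ → Fin D) × (Fin (k - ℓ) → Fin D)) : (Fin k → Fin D) → ℂ :=
  fun s => (∏ i : Fin ℓ, if s (Fin.castLE hℓ i) = R.1 i then 1 else 0) *
    ∏ j : Fin (k - ℓ), ((dft D)ᴴ) (s ⟨ℓ + (j : ℕ), by have := j.2; omega⟩) (R.2 j.rev)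

/-- The average `f̄^R` of an observable over a quantum rectangle (of measure `D^{-k}`). -/
noncomputable def rectAvg (D k ℓ : ℕ) (hD : 0 < D)
    (f : (ℕ → Fin D) × (ℕ → Fin D) → ℂ)
    (R : (Fin ℓ → Fin D) × (Fin (k - ℓ) → Fin D)) : ℂ :=
  (D : ℂ) ^ k * ∫ x in rectSet D k ℓ R, f x ∂(symbMeasure D hD)

/-- The Walsh anti-Wick quantization `Op_{k,ℓ}(f) = ∑_R f̄^R |R⟩⟨R|`. -/
noncomputable def antiWick (D k ℓ : ℕ) (hD : 0 < D) (hℓ : ℓ ≤ k)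
    (f : (ℕ → Fin D) × (ℕ → Fin D) → ℂ) :
    Matrix (Fin k → Fin D) (Fin k → Fin D) ℂ :=
  ∑ R : (Fin ℓ → Fin D) × (Fin (k - ℓ) → Fin D),
    rectAvg D k ℓ hD f R •
      Matrix.vecMulVec (coherent D k ℓ hℓ R) (star (coherent D k ℓ hℓ R))

/-
In the orthonormal basis of Walsh coherent states |R⟩, Op_{k,ℓ}(f) is diagonal with eigenvalues
the rectangle averages f̄^R. Hence Op_{k,ℓ}(fg) - Op_{k,ℓ}(f) Op_{k,ℓ}(g) is diagonal with
eigenvalues (fg)‾^R - f̄^R ḡ^R, which is the average over R of (f - f̄^R) g. On R, whose symbolic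
diameter is D^{-min(ℓ, k-ℓ)}, |f - f̄^R| ≤ ‖f‖_Lip D^{-min(ℓ, k-ℓ)} and |g| ≤ ‖g‖_Lip, and by
Bessel's inequality the operator norm is at most the largest |eigenvalue|. The adjoint and trace
formulas are read off the same diagonal form, the latter because the rectangles partition Σ.

The coherent states are orthonormal because the DFT is unitary, and R has measure D^{-k} because
the points of [0,1) whose first m digits form a given word fill a D-adic interval of length D^{-m}.
-/

open Filter Topology Function
open scoped ENNReal

lemma dft_apply_eq_zpow (D : ℕ) (j k : Fin D) :
    dft D j k =
      ((√D)⁻¹ : ℝ) * Complex.exp (2 * Real.pi * Complex.I / D) ^ (-((j : ℤ) * k)) := by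
  rw [dft, ← Complex.exp_int_mul, one_div]
  congr 2
  push_cast
  ring

lemma star_dft_apply_eq_zpow (D : ℕ) (j k : Fin D) :
    star (dft D j k) =
      ((√D)⁻¹ : ℝ) * Complex.exp (2 * Real.pi * Complex.I / D) ^ ((j : ℤ) * k) := by
  rw [dft, ← Complex.exp_int_mul, one_div, Complex.star_def, map_mul, Complex.conj_ofReal,
    ← Complex.exp_conj]
  congr 2
  simp only [map_div₀, map_mul, map_neg, map_ofNat, Complex.conj_I, Complex.conj_ofReal,
    map_natCast]
  push_cast
  ring

lemma sum_pow_eq_zero_of_pow_eq_one_s19 {w : ℂ} {D : ℕ} (hw : w ^ D = 1) (hw1 : w ≠ 1) :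
    ∑ x : Fin D, w ^ (x : ℕ) = 0 := by
  rw [Fin.sum_univ_eq_sum_range (w ^ ·), geom_sum_eq hw1, hw, sub_self, zero_div]

lemma dft_mul_conjTranspose {D : ℕ} (hD : 0 < D) : dft D * (dft D)ᴴ = 1 := by
  set ζ := Complex.exp (2 * Real.pi * Complex.I / D)
  have hζ : IsPrimitiveRoot ζ D := Complex.isPrimitiveRoot_exp D hD.ne'
  have hnorm : ((√D)⁻¹ : ℝ) * ((√D)⁻¹ : ℝ) = (D : ℂ)⁻¹ := by
    rw [← Complex.ofReal_mul, ← mul_inv, Real.mul_self_sqrt D.cast_nonneg, Complex.ofReal_inv,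
      Complex.ofReal_natCast]
  have hterm : ∀ a b x : Fin D,
      dft D a x * star (dft D b x) = (D : ℂ)⁻¹ * (ζ ^ ((b : ℤ) - a)) ^ (x : ℕ) := by
    intro a b x
    rw [dft_apply_eq_zpow, star_dft_apply_eq_zpow, ← zpow_natCast, ← zpow_mul, ← hnorm,
      mul_mul_mul_comm, ← zpow_add₀ (hζ.ne_zero hD.ne')]
    ring_nf
  ext a b
  simp only [Matrix.mul_apply, Matrix.conjTranspose_apply, hterm, ← Finset.mul_sum,
    Matrix.one_apply]
  split_ifs with hab
  · subst hab
    simp [hD.ne']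
  · have hne : ζ ^ ((b : ℤ) - a) ≠ 1 := by
      rw [Ne, hζ.zpow_eq_one_iff_dvd]
      intro hdvd
      have := Int.eq_zero_of_abs_lt_dvd hdvd (by rw [abs_lt]; omega)
      exact hab (Fin.ext (by omega))
    have hpow : (ζ ^ ((b : ℤ) - a)) ^ D = 1 := by
      rw [← zpow_natCast, ← zpow_mul, mul_comm, zpow_mul, zpow_natCast, hζ.pow_eq_one, one_zpow]
    rw [sum_pow_eq_zero_of_pow_eq_one_s19 hpow hne, mul_zero]

section TensorProduct

open Matrix

lemma mul_dotProduct_mul {α β R : Type*} [Fintype α] [Fintype β] [CommSemiring R]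
    (u u' : α → R) (w w' : β → R) :
    (fun p : α × β => u p.1 * w p.2) ⬝ᵥ (fun p => u' p.1 * w' p.2) = (u ⬝ᵥ u') * (w ⬝ᵥ w') := by
  simp only [dotProduct, Fintype.sum_prod_type, Finset.sum_mul_sum]
  exact Finset.sum_congr rfl fun _ _ => Finset.sum_congr rfl fun _ _ => by ring

lemma prod_dotProduct_prod {ι α R : Type*} [Fintype ι] [DecidableEq ι] [Fintype α]
    [CommSemiring R] (φ ψ : ι → α → R) :
    (fun s : ι → α => ∏ i, φ i (s i)) ⬝ᵥ (fun s => ∏ i, ψ i (s i)) = ∏ i, φ i ⬝ᵥ ψ i := by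
  simp only [dotProduct, Fintype.prod_sum, Finset.prod_mul_distrib]

def tensorCol {ι α : Type*} [Fintype ι] (A : Matrix α α ℂ) (w : ι → α) : (ι → α) → ℂ :=
  fun s => ∏ i, Aᴴ (s i) (w i)

lemma star_tensorCol_dotProduct {ι α : Type*} [Fintype ι] [DecidableEq ι] [Fintype α]
    [DecidableEq α] {A : Matrix α α ℂ} (hA : A * Aᴴ = 1) (w w' : ι → α) :
    star (tensorCol A w) ⬝ᵥ tensorCol A w' = (1 : Matrix (ι → α) (ι → α) ℂ) w w' := by
  have hcol : ∀ a b, (fun x => star (Aᴴ x a)) ⬝ᵥ (fun x => Aᴴ x b) = (1 : Matrix α α ℂ) a b := by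
    intro a b
    rw [← hA]
    simp [dotProduct, mul_apply]
  calc star (tensorCol A w) ⬝ᵥ tensorCol A w'
      = (fun s => ∏ i, star (Aᴴ (s i) (w i))) ⬝ᵥ tensorCol A w' := by
        congr 1
        ext s
        simp [tensorCol, star_prod]
    _ = ∏ i, (fun x => star (Aᴴ x (w i))) ⬝ᵥ (fun x => Aᴴ x (w' i)) :=
        prod_dotProduct_prod (fun i x => star (Aᴴ x (w i))) (fun i x => Aᴴ x (w' i))
    _ = ∏ i, (1 : Matrix α α ℂ) (w i) (w' i) := by simp only [hcol]
    _ = (1 : Matrix (ι → α) (ι → α) ℂ) w w' := by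
        simp [one_apply, Finset.prod_boole, funext_iff]

def finFunctionSplitEquiv (α : Type*) {k ℓ : ℕ} (hℓ : ℓ ≤ k) :
    (Fin k → α) ≃ (Fin ℓ → α) × (Fin (k - ℓ) → α) :=
  ((Fin.appendEquiv ℓ (k - ℓ)).trans
    ((finCongr (Nat.add_sub_cancel' hℓ)).arrowCongr (Equiv.refl α))).symm

lemma coherent_apply {D k ℓ : ℕ} (hℓ : ℓ ≤ k) (R : (Fin ℓ → Fin D) × (Fin (k - ℓ) → Fin D))
    (s : Fin k → Fin D) :
    coherent D k ℓ hℓ R s = tensorCol 1 R.1 (finFunctionSplitEquiv (Fin D) hℓ s).1 *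
      tensorCol (dft D) (R.2 ∘ Fin.rev) (finFunctionSplitEquiv (Fin D) hℓ s).2 := by
  simp only [tensorCol, conjTranspose_one, one_apply]
  rfl

lemma star_coherent_dotProduct {D k ℓ : ℕ} (hD : 0 < D) (hℓ : ℓ ≤ k)
    (R R' : (Fin ℓ → Fin D) × (Fin (k - ℓ) → Fin D)) :
    star (coherent D k ℓ hℓ R) ⬝ᵥ coherent D k ℓ hℓ R' = (1 : Matrix _ _ ℂ) R R' := by
  set e := finFunctionSplitEquiv (Fin D) hℓ
  calc star (coherent D k ℓ hℓ R) ⬝ᵥ coherent D k ℓ hℓ R'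
      = (fun p => star (tensorCol 1 R.1) p.1 * star (tensorCol (dft D) (R.2 ∘ Fin.rev)) p.2) ∘ e
          ⬝ᵥ (fun p => tensorCol 1 R'.1 p.1 * tensorCol (dft D) (R'.2 ∘ Fin.rev) p.2) ∘ e := by
        congr 1 <;> ext s <;> simp [coherent_apply, e]
    _ = (star (tensorCol 1 R.1) ⬝ᵥ tensorCol 1 R'.1) *
          (star (tensorCol (dft D) (R.2 ∘ Fin.rev)) ⬝ᵥ tensorCol (dft D) (R'.2 ∘ Fin.rev)) := by
        rw [comp_equiv_dotProduct_comp_equiv, mul_dotProduct_mul]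
    _ = (1 : Matrix _ _ ℂ) R R' := by
        rw [star_tensorCol_dotProduct (by simp),
          star_tensorCol_dotProduct (dft_mul_conjTranspose hD)]
        simp only [one_apply, Prod.ext_iff, Fin.rev_surjective.injective_comp_right.eq_iff]
        split_ifs <;> simp_all

end TensorProduct

lemma Orthonormal.norm_sum_smul_sq {𝕜 E ι : Type*} [RCLike 𝕜] [NormedAddCommGroup E]
    [InnerProductSpace 𝕜 E] [Fintype ι] {u : ι → E} (hu : Orthonormal 𝕜 u) (a : ι → 𝕜) :
    ‖∑ i, a i • u i‖ ^ 2 = ∑ i, ‖a i‖ ^ 2 := by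
  rw [@norm_sq_eq_re_inner 𝕜, hu.inner_sum]
  simp [RCLike.conj_mul]

lemma Orthonormal.norm_sum_mul_inner_smul_le {𝕜 E ι : Type*} [RCLike 𝕜] [NormedAddCommGroup E]
    [InnerProductSpace 𝕜 E] [Fintype ι] {u : ι → E} (hu : Orthonormal 𝕜 u) {c : ι → 𝕜} {B : ℝ}
    (hB : 0 ≤ B) (hc : ∀ i, ‖c i‖ ≤ B) (y : E) :
    ‖∑ i, (c i * inner 𝕜 (u i) y) • u i‖ ≤ B * ‖y‖ := by
  refine le_of_sq_le_sq ?_ (by positivity)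
  calc ‖∑ i, (c i * inner 𝕜 (u i) y) • u i‖ ^ 2
      = ∑ i, ‖c i‖ ^ 2 * ‖inner 𝕜 (u i) y‖ ^ 2 := by simp [hu.norm_sum_smul_sq, mul_pow]
    _ ≤ ∑ i, B ^ 2 * ‖inner 𝕜 (u i) y‖ ^ 2 := by
        gcongr with i
        exact hc i
    _ ≤ (B * ‖y‖) ^ 2 := by
        rw [← Finset.mul_sum, mul_pow]
        exact mul_le_mul_of_nonneg_left (hu.sum_inner_products_le y) (by positivity)

section RankOneSum

open Matrix

variable {ι n : Type*} {v : ι → n → ℂ}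

lemma vecMulVec_mul_vecMulVec_of_orthonormal [DecidableEq ι] [Fintype n]
    (hv : ∀ i j, star (v i) ⬝ᵥ v j = (1 : Matrix ι ι ℂ) i j) (i j : ι) :
    vecMulVec (v i) (star (v i)) * vecMulVec (v j) (star (v j)) =
      if i = j then vecMulVec (v i) (star (v i)) else 0 := by
  rw [vecMulVec_mul_vecMulVec, hv, one_apply]
  split_ifs with h
  · rw [h, one_smul]
  · rw [zero_smul, vecMulVec_zero]

lemma sum_smul_vecMulVec_mul [Fintype ι] [DecidableEq ι] [Fintype n]
    (hv : ∀ i j, star (v i) ⬝ᵥ v j = (1 : Matrix ι ι ℂ) i j) (c d : ι → ℂ) :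
    (∑ i, c i • vecMulVec (v i) (star (v i))) * (∑ i, d i • vecMulVec (v i) (star (v i))) =
      ∑ i, (c i * d i) • vecMulVec (v i) (star (v i)) := by
  simp [Finset.sum_mul_sum, vecMulVec_mul_vecMulVec_of_orthonormal hv, smul_smul, mul_comm]

lemma conjTranspose_sum_smul_vecMulVec [Fintype ι] (c : ι → ℂ) :
    (∑ i, c i • vecMulVec (v i) (star (v i)))ᴴ =
      ∑ i, star (c i) • vecMulVec (v i) (star (v i)) := by
  simp [conjTranspose_sum]

lemma trace_sum_smul_vecMulVec [Fintype ι] [DecidableEq ι] [Fintype n]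
    (hv : ∀ i j, star (v i) ⬝ᵥ v j = (1 : Matrix ι ι ℂ) i j) (c : ι → ℂ) :
    trace (∑ i, c i • vecMulVec (v i) (star (v i))) = ∑ i, c i := by
  simp [trace_sum, dotProduct_comm (v _), hv]

lemma toEuclideanCLM_sum_smul_vecMulVec [Fintype ι] [Fintype n] [DecidableEq n] (c : ι → ℂ)
    (y : EuclideanSpace ℂ n) :
    toEuclideanCLM (𝕜 := ℂ) (∑ i, c i • vecMulVec (v i) (star (v i))) y =
      ∑ i, (c i * inner ℂ (WithLp.toLp 2 (v i)) y) • WithLp.toLp 2 (v i) := by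
  have hrankOne : ∀ i, toEuclideanCLM (𝕜 := ℂ) (vecMulVec (v i) (star (v i))) y =
      (star (v i) ⬝ᵥ WithLp.ofLp y) • WithLp.toLp 2 (v i) := by
    intro i
    rw [← WithLp.toLp_ofLp (p := 2) y, toEuclideanCLM_toLp, vecMulVec_mulVec, op_smul_eq_smul]
    rfl
  simp [hrankOne, EuclideanSpace.inner_eq_star_dotProduct, dotProduct_comm, mul_smul]

lemma norm_toEuclideanCLM_sum_smul_vecMulVec_le [Fintype ι] [DecidableEq ι] [Fintype n]
    [DecidableEq n] (hv : ∀ i j, star (v i) ⬝ᵥ v j = (1 : Matrix ι ι ℂ) i j) {c : ι → ℂ} {B : ℝ}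
    (hB : 0 ≤ B) (hc : ∀ i, ‖c i‖ ≤ B) :
    ‖toEuclideanCLM (𝕜 := ℂ) (∑ i, c i • vecMulVec (v i) (star (v i)))‖ ≤ B := by
  have hu : Orthonormal ℂ fun i => WithLp.toLp 2 (v i) := by
    rw [orthonormal_iff_ite]
    intro i j
    rw [EuclideanSpace.inner_toLp_toLp, dotProduct_comm, hv, one_apply]
  refine ContinuousLinearMap.opNorm_le_bound _ hB fun y => ?_
  rw [toEuclideanCLM_sum_smul_vecMulVec]
  exact hu.norm_sum_mul_inner_smul_le hB hc y

end RankOneSum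

section SetAverage

variable {α : Type*} [MeasurableSpace α] {μ : Measure α} {s : Set α}

lemma norm_setAverage_le_of_norm_le_const {E : Type*} [NormedAddCommGroup E] [NormedSpace ℝ E]
    (hs₀ : μ s ≠ 0) (hs : μ s ≠ ∞) {f : α → E} {C : ℝ} (hC : ∀ x ∈ s, ‖f x‖ ≤ C) :
    ‖⨍ x in s, f x ∂μ‖ ≤ C := by
  have hpos : 0 < μ.real s := ENNReal.toReal_pos hs₀ hs
  rw [setAverage_eq, norm_smul, norm_inv, Real.norm_of_nonneg hpos.le, inv_mul_le_iff₀ hpos,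
    mul_comm]
  exact norm_setIntegral_le_of_norm_le_const hs.lt_top hC

lemma norm_setAverage_mul_sub_mul_le (hs₀ : μ s ≠ 0) (hs : μ s ≠ ∞) {f g : α → ℂ}
    (hf : IntegrableOn f s μ) (hg : IntegrableOn g s μ)
    (hfg : IntegrableOn (fun x => f x * g x) s μ) {a b : ℝ}
    (hfa : ∀ x ∈ s, ∀ y ∈ s, ‖f x - f y‖ ≤ a) (hgb : ∀ x ∈ s, ‖g x‖ ≤ b) :
    ‖(⨍ x in s, f x * g x ∂μ) - (⨍ x in s, f x ∂μ) * ⨍ x in s, g x ∂μ‖ ≤ a * b := by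
  set c := ⨍ x in s, f x ∂μ
  have hosc : ∀ x ∈ s, ‖f x - c‖ ≤ a := by
    intro x hx
    have hfx : f x - c = ⨍ y in s, (f x - f y) ∂μ := by
      rw [setAverage_eq, integral_sub (integrableOn_const (C := f x) hs) hf, smul_sub,
        ← setAverage_eq, ← setAverage_eq, setAverage_const hs₀ hs]
    rw [hfx]
    exact norm_setAverage_le_of_norm_le_const hs₀ hs fun y hy => hfa x hx y hy
  have hcov : (⨍ x in s, f x * g x ∂μ) - c * ⨍ x in s, g x ∂μ =
      ⨍ x in s, (f x - c) * g x ∂μ := by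
    simp_rw [sub_mul, setAverage_eq, integral_sub hfg (hg.const_mul c), integral_const_mul,
      smul_sub, ← mul_smul_comm]
  rw [hcov]
  refine norm_setAverage_le_of_norm_le_const hs₀ hs fun x hx => ?_
  rw [norm_mul]
  exact mul_le_mul (hosc x hx) (hgb x hx) (norm_nonneg _) ((norm_nonneg _).trans (hosc x hx))

end SetAverage

lemma digitFun_val {D : ℕ} (hD : 0 < D) (x : ℝ) {m i : ℕ} (hi : i < m) :
    (digitFun D hD x i : ℕ) = ⌊x * (D : ℝ) ^ m⌋₊ / D ^ (m - 1 - i) % D := by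
  have hshift : x * (D : ℝ) ^ m / ((D ^ (m - 1 - i) : ℕ) : ℝ) = x * (D : ℝ) ^ (i + 1) := by
    rw [Nat.cast_pow, div_eq_iff (by positivity), mul_assoc, ← pow_add]
    congr 2
    omega
  rw [← Nat.floor_div_natCast, hshift, ← Int.floor_toNat]
  rfl

def seqCylinder (D m : ℕ) (w : Fin m → Fin D) : Set (ℕ → Fin D) :=
  {u | ∀ i : Fin m, u i = w i}

-- `finFunctionFinEquiv` reads a word least significant letter first, whereas the digits of `x`
-- come most significant first: hence `Fin.rev`.
lemma digitFun_mem_seqCylinder_iff {D : ℕ} (hD : 0 < D) {x : ℝ} (hx : x ∈ Set.Ico (0 : ℝ) 1)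
    {m : ℕ} (w : Fin m → Fin D) :
    digitFun D hD x ∈ seqCylinder D m w ↔
      ⌊x * (D : ℝ) ^ m⌋₊ = finFunctionFinEquiv (w ∘ Fin.rev) := by
  have hlt : ⌊x * (D : ℝ) ^ m⌋₊ < D ^ m := by
    rw [Nat.floor_lt (by have := hx.1; positivity)]
    push_cast
    exact mul_lt_of_lt_one_left (by positivity) hx.2
  have hdigit : ∀ i : Fin m, digitFun D hD x i = finFunctionFinEquiv.symm ⟨_, hlt⟩ i.rev := by
    intro i
    ext
    rw [digitFun_val hD x i.2]
    show _ = ⌊x * (D : ℝ) ^ m⌋₊ / D ^ (i.rev : ℕ) % D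
    rw [Fin.val_rev, Nat.sub_sub, add_comm]
  simp only [seqCylinder, Set.mem_ofPred_eq, hdigit]
  trans (⟨_, hlt⟩ : Fin (D ^ m)) = finFunctionFinEquiv (w ∘ Fin.rev)
  · rw [← Equiv.symm_apply_eq, funext_iff]
    exact Fin.revPerm.forall_congr (by simp)
  · exact Fin.ext_iff

lemma digitFun_preimage_seqCylinder {D : ℕ} (hD : 0 < D) {m : ℕ} (w : Fin m → Fin D) :
    digitFun D hD ⁻¹' seqCylinder D m w ∩ Set.Ico 0 1 =
      Set.Ico ((finFunctionFinEquiv (w ∘ Fin.rev) : ℕ) / (D : ℝ) ^ m)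
        (((finFunctionFinEquiv (w ∘ Fin.rev) : ℕ) + 1) / (D : ℝ) ^ m) := by
  set N := finFunctionFinEquiv (w ∘ Fin.rev)
  have hpos : (0 : ℝ) < (D : ℝ) ^ m := by positivity
  have hfloor : ∀ x : ℝ, 0 ≤ x → (⌊x * (D : ℝ) ^ m⌋₊ = N ↔
      x ∈ Set.Ico ((N : ℕ) / (D : ℝ) ^ m) (((N : ℕ) + 1) / (D : ℝ) ^ m)) := by
    intro x hx
    rw [Nat.floor_eq_iff (by positivity), Set.mem_Ico, div_le_iff₀ hpos, lt_div_iff₀ hpos]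
  ext x
  simp only [Set.mem_inter_iff, Set.mem_preimage]
  constructor
  · rintro ⟨hcyl, hx⟩
    exact (hfloor x hx.1).1 ((digitFun_mem_seqCylinder_iff hD hx w).1 hcyl)
  · intro hx
    have hx0 : 0 ≤ x := le_trans (by positivity) hx.1
    have hx1 : x < 1 := hx.2.trans_le <| by
      rw [div_le_one hpos]
      exact_mod_cast N.2
    exact ⟨(digitFun_mem_seqCylinder_iff hD ⟨hx0, hx1⟩ w).2 ((hfloor x hx0).2 hx), hx0, hx1⟩

lemma measurable_digitFun {D : ℕ} (hD : 0 < D) : Measurable (digitFun D hD) :=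
  measurable_pi_lambda _ fun _ =>
    (measurable_from_top (f := fun z : ℤ => (⟨z.toNat % D, Nat.mod_lt _ hD⟩ : Fin D))).comp
      (measurable_id.mul_const _).floor

lemma measurableSet_seqCylinder (D m : ℕ) (w : Fin m → Fin D) :
    MeasurableSet (seqCylinder D m w) := by
  rw [seqCylinder, Set.ofPred_forall]
  exact MeasurableSet.iInter fun i => measurableSet_eq_fun (measurable_pi_apply _) measurable_const

lemma digitMeasure_seqCylinder {D : ℕ} (hD : 0 < D) {m : ℕ} (w : Fin m → Fin D) :
    digitMeasure D hD (seqCylinder D m w) = ENNReal.ofReal ((D : ℝ) ^ m)⁻¹ := by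
  rw [digitMeasure, Measure.map_apply (measurable_digitFun hD) (measurableSet_seqCylinder D m w),
    Measure.restrict_apply (measurable_digitFun hD (measurableSet_seqCylinder D m w)),
    digitFun_preimage_seqCylinder, Real.volume_Ico, ← sub_div, add_sub_cancel_left, one_div]

instance {D : ℕ} (hD : 0 < D) : IsProbabilityMeasure (digitMeasure D hD) := by
  have : IsProbabilityMeasure (volume.restrict (Set.Ico (0 : ℝ) 1)) := ⟨by simp⟩
  exact Measure.isProbabilityMeasure_map (measurable_digitFun hD).aemeasurable

instance {D : ℕ} (hD : 0 < D) : IsProbabilityMeasure (symbMeasure D hD) := by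
  rw [symbMeasure]
  infer_instance

lemma rectSet_eq_prod (D k ℓ : ℕ) (R : (Fin ℓ → Fin D) × (Fin (k - ℓ) → Fin D)) :
    rectSet D k ℓ R = seqCylinder D (k - ℓ) R.2 ×ˢ seqCylinder D ℓ R.1 := by
  ext x
  simp only [rectSet, seqCylinder, Set.mem_ofPred_eq, Set.mem_prod]
  exact and_comm

lemma measurableSet_rectSet (D k ℓ : ℕ) (R : (Fin ℓ → Fin D) × (Fin (k - ℓ) → Fin D)) :
    MeasurableSet (rectSet D k ℓ R) := by
  rw [rectSet_eq_prod]
  exact (measurableSet_seqCylinder _ _ _).prod (measurableSet_seqCylinder _ _ _)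

lemma symbMeasure_rectSet {D k ℓ : ℕ} (hD : 0 < D) (hℓ : ℓ ≤ k)
    (R : (Fin ℓ → Fin D) × (Fin (k - ℓ) → Fin D)) :
    symbMeasure D hD (rectSet D k ℓ R) = ENNReal.ofReal ((D : ℝ) ^ k)⁻¹ := by
  rw [rectSet_eq_prod, symbMeasure, Measure.prod_prod, digitMeasure_seqCylinder,
    digitMeasure_seqCylinder, ← ENNReal.ofReal_mul (by positivity), ← mul_inv, ← pow_add,
    Nat.sub_add_cancel hℓ]

lemma pairwise_disjoint_rectSet (D k ℓ : ℕ) : Pairwise (Disjoint on (rectSet D k ℓ)) := by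
  intro R R' hne
  refine Set.disjoint_left.2 fun x hx hx' =>
    hne (Prod.ext (funext fun i => ?_) (funext fun i => ?_))
  · exact (hx.1 i).symm.trans (hx'.1 i)
  · exact (hx.2 i).symm.trans (hx'.2 i)

lemma iUnion_rectSet (D k ℓ : ℕ) : ⋃ R, rectSet D k ℓ R = Set.univ :=
  Set.eq_univ_of_forall fun x =>
    Set.mem_iUnion.2 ⟨(fun i => x.2 i, fun i => x.1 i), fun _ => rfl, fun _ => rfl⟩

lemma sum_setIntegral_rectSet {D k ℓ : ℕ} {μ : Measure ((ℕ → Fin D) × (ℕ → Fin D))}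
    {f : (ℕ → Fin D) × (ℕ → Fin D) → ℂ} (hf : Integrable f μ) :
    ∑ R, ∫ x in rectSet D k ℓ R, f x ∂μ = ∫ x, f x ∂μ := by
  rw [← integral_iUnion_fintype (measurableSet_rectSet D k ℓ) (pairwise_disjoint_rectSet D k ℓ)
    fun _ => hf.integrableOn, iUnion_rectSet, setIntegral_univ]

lemma seqDist_le_of_forall_lt_eq {D : ℕ} (hD : 0 < D) {u v : ℕ → Fin D} {m : ℕ}
    (h : ∀ i < m, u i = v i) : seqDist D u v ≤ ((D : ℝ) ^ m)⁻¹ := by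
  unfold seqDist
  split_ifs with huv
  · positivity
  · have hmem := Nat.sInf_mem (Function.ne_iff.1 huv)
    have hm : m ≤ sInf {n | u n ≠ v n} := not_lt.1 fun hlt => hmem (h _ hlt)
    rw [zpow_neg, zpow_natCast]
    exact inv_anti₀ (by positivity) (pow_le_pow_right₀ (by exact_mod_cast hD) hm)

lemma symbDist_le_of_mem_rectSet {D k ℓ : ℕ} (hD : 0 < D)
    {R : (Fin ℓ → Fin D) × (Fin (k - ℓ) → Fin D)} {x y : (ℕ → Fin D) × (ℕ → Fin D)}
    (hx : x ∈ rectSet D k ℓ R) (hy : y ∈ rectSet D k ℓ R) :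
    symbDist D x y ≤ ((D : ℝ) ^ min ℓ (k - ℓ))⁻¹ := by
  have hmono : ∀ m, min ℓ (k - ℓ) ≤ m → ((D : ℝ) ^ m)⁻¹ ≤ ((D : ℝ) ^ min ℓ (k - ℓ))⁻¹ :=
    fun m hm => inv_anti₀ (by positivity) (pow_le_pow_right₀ (by exact_mod_cast hD) hm)
  refine max_le
    ((seqDist_le_of_forall_lt_eq hD fun i hi => ?_).trans (hmono _ (min_le_right _ _)))
    ((seqDist_le_of_forall_lt_eq hD fun i hi => ?_).trans (hmono _ (min_le_left _ _)))
  · exact (hx.2 ⟨i, hi⟩).trans (hy.2 ⟨i, hi⟩).symm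
  · exact (hx.1 ⟨i, hi⟩).trans (hy.1 ⟨i, hi⟩).symm

lemma continuous_of_norm_sub_le_mul_symbDist {D : ℕ} (hD : 0 < D) {E : Type*}
    [SeminormedAddCommGroup E] {f : (ℕ → Fin D) × (ℕ → Fin D) → E} {L : ℝ} (hL : 0 ≤ L)
    (hf : ∀ x y, ‖f x - f y‖ ≤ L * symbDist D x y) : Continuous f := by
  rcases Nat.lt_or_ge 1 D with hD1 | hD1
  swap
  · have : Subsingleton (Fin D) := Fin.subsingleton_iff_le_one.2 hD1
    exact continuous_of_const fun x y => congrArg f (Subsingleton.elim x y)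
  refine continuous_iff_continuousAt.2 fun x => Metric.tendsto_nhds.2 fun ε hε => ?_
  obtain ⟨n, hn⟩ : ∃ n : ℕ, L * ((D : ℝ) ^ n)⁻¹ < ε := by
    have h := (tendsto_inv_atTop_zero.comp
      (tendsto_pow_atTop_atTop_of_one_lt (by exact_mod_cast hD1 : (1 : ℝ) < D))).const_mul L
    rw [mul_zero] at h
    exact (h.eventually (gt_mem_nhds hε)).exists
  have hagree : ∀ᶠ y in 𝓝 x, ∀ i : Fin n, y.1 i = x.1 i ∧ y.2 i = x.2 i := by
    refine eventually_all.2 fun i => ?_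
    have hcoord : ∀ g : (ℕ → Fin D) × (ℕ → Fin D) → Fin D, Continuous g →
        ∀ᶠ y in 𝓝 x, g y = g x := fun g hg =>
      hg.continuousAt.eventually_mem ((isOpen_discrete {g x}).mem_nhds rfl)
    exact (hcoord (fun y => y.1 i) ((continuous_apply _).comp continuous_fst)).and
      (hcoord (fun y => y.2 i) ((continuous_apply _).comp continuous_snd))
  filter_upwards [hagree] with y hy
  rw [dist_eq_norm]
  calc ‖f y - f x‖ ≤ L * symbDist D y x := hf y x
    _ ≤ L * ((D : ℝ) ^ n)⁻¹ := by
        refine mul_le_mul_of_nonneg_left (max_le ?_ ?_) hL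
        · exact seqDist_le_of_forall_lt_eq hD fun i hi => (hy ⟨i, hi⟩).1
        · exact seqDist_le_of_forall_lt_eq hD fun i hi => (hy ⟨i, hi⟩).2
    _ < ε := hn

lemma rectAvg_eq_setAverage {D k ℓ : ℕ} (hD : 0 < D) (hℓ : ℓ ≤ k)
    (f : (ℕ → Fin D) × (ℕ → Fin D) → ℂ) (R : (Fin ℓ → Fin D) × (Fin (k - ℓ) → Fin D)) :
    rectAvg D k ℓ hD f R = ⨍ x in rectSet D k ℓ R, f x ∂symbMeasure D hD := by
  rw [rectAvg, setAverage_eq, measureReal_def, symbMeasure_rectSet hD hℓ,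
    ENNReal.toReal_ofReal (by positivity), inv_inv, Complex.real_smul]
  push_cast
  rfl

lemma norm_rectAvg_mul_sub_le {D k ℓ : ℕ} (hD : 0 < D) (hℓ : ℓ ≤ k)
    {f g : (ℕ → Fin D) × (ℕ → Fin D) → ℂ} {Lf Lg : ℝ} (hLf : 0 ≤ Lf)
    (hf : Integrable f (symbMeasure D hD)) (hg : Integrable g (symbMeasure D hD))
    (hfg : Integrable (fun x => f x * g x) (symbMeasure D hD))
    (hfl : ∀ x y, ‖f x - f y‖ ≤ Lf * symbDist D x y) (hgb : ∀ x, ‖g x‖ ≤ Lg)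
    (R : (Fin ℓ → Fin D) × (Fin (k - ℓ) → Fin D)) :
    ‖rectAvg D k ℓ hD (fun x => f x * g x) R - rectAvg D k ℓ hD f R * rectAvg D k ℓ hD g R‖ ≤
      Lf * Lg * ((D : ℝ) ^ min ℓ (k - ℓ))⁻¹ := by
  have hμR := symbMeasure_rectSet hD hℓ R
  have hDk : (0 : ℝ) < (D : ℝ) ^ k := by positivity
  simp only [rectAvg_eq_setAverage hD hℓ]
  rw [mul_right_comm]
  refine norm_setAverage_mul_sub_mul_le (by simp [hμR, hDk]) (by simp [hμR]) hf.integrableOn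
    hg.integrableOn hfg.integrableOn (fun x hx y hy => ?_) fun x _ => hgb x
  exact (hfl x y).trans (mul_le_mul_of_nonneg_left (symbDist_le_of_mem_rectSet hD hx hy) hLf)

lemma rectAvg_conj {D k ℓ : ℕ} (hD : 0 < D) (f : (ℕ → Fin D) × (ℕ → Fin D) → ℂ)
    (R : (Fin ℓ → Fin D) × (Fin (k - ℓ) → Fin D)) :
    rectAvg D k ℓ hD (fun x => (starRingEnd ℂ) (f x)) R = star (rectAvg D k ℓ hD f R) := by
  simp [rectAvg, integral_conj]

/-- Properties of the Walsh anti-Wick quantization: for Lipschitz observables `f, g` on the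
symbolic space `Σ` (with `Lf, Lg` bounding both the sup-norm and the Lipschitz constant, as
the Lipschitz norm `‖·‖_Lip` does),
`‖Op_{k,ℓ}(fg) − Op_{k,ℓ}(f) Op_{k,ℓ}(g)‖ ≤ ‖f‖_Lip ‖g‖_Lip D^{-min(ℓ, k-ℓ)}`;
moreover `Op_{k,ℓ}(f̄) = Op_{k,ℓ}(f)*` and `tr Op_{k,ℓ}(f) = D^k ∫ f dx`. -/
theorem antiWick_properties {D k ℓ : ℕ} (hD : 0 < D) (hℓ : ℓ ≤ k)
    (f g : (ℕ → Fin D) × (ℕ → Fin D) → ℂ) (Lf Lg : ℝ)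
    (hfb : ∀ x, ‖f x‖ ≤ Lf) (hfl : ∀ x y, ‖f x - f y‖ ≤ Lf * symbDist D x y)
    (hgb : ∀ x, ‖g x‖ ≤ Lg) (hgl : ∀ x y, ‖g x - g y‖ ≤ Lg * symbDist D x y) :
    ‖Matrix.toEuclideanCLM (𝕜 := ℂ)
        (antiWick D k ℓ hD hℓ (fun x => f x * g x) -
          antiWick D k ℓ hD hℓ f * antiWick D k ℓ hD hℓ g)‖ ≤
      Lf * Lg * (D : ℝ) ^ (-((min ℓ (k - ℓ) : ℕ) : ℝ)) ∧
    antiWick D k ℓ hD hℓ (fun x => (starRingEnd ℂ) (f x)) = (antiWick D k ℓ hD hℓ f)ᴴ ∧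
    Matrix.trace (antiWick D k ℓ hD hℓ f) =
      (D : ℂ) ^ k * ∫ x, f x ∂(symbMeasure D hD) := by
  have x₀ : (ℕ → Fin D) × (ℕ → Fin D) := (fun _ => ⟨0, hD⟩, fun _ => ⟨0, hD⟩)
  have hLf : 0 ≤ Lf := (norm_nonneg _).trans (hfb x₀)
  have hLg : 0 ≤ Lg := (norm_nonneg _).trans (hgb x₀)
  have hfc := continuous_of_norm_sub_le_mul_symbDist hD hLf hfl
  have hgc := continuous_of_norm_sub_le_mul_symbDist hD hLg hgl
  have hfi : Integrable f (symbMeasure D hD) :=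
    .of_bound hfc.aestronglyMeasurable Lf (ae_of_all _ hfb)
  have hgi : Integrable g (symbMeasure D hD) :=
    .of_bound hgc.aestronglyMeasurable Lg (ae_of_all _ hgb)
  have hfgi : Integrable (fun x => f x * g x) (symbMeasure D hD) :=
    .of_bound (hfc.mul hgc).aestronglyMeasurable (Lf * Lg) (ae_of_all _ fun x => by
      rw [norm_mul]; exact mul_le_mul (hfb x) (hgb x) (norm_nonneg _) hLf)
  have hcoh := star_coherent_dotProduct hD hℓ
  refine ⟨?_, ?_, ?_⟩
  · rw [antiWick, antiWick, antiWick, sum_smul_vecMulVec_mul hcoh, ← Finset.sum_sub_distrib]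
    simp_rw [← sub_smul]
    rw [Real.rpow_neg (Nat.cast_nonneg _), Real.rpow_natCast]
    exact norm_toEuclideanCLM_sum_smul_vecMulVec_le hcoh (by positivity)
      (norm_rectAvg_mul_sub_le hD hℓ hLf hfi hgi hfgi hfl hgb)
  · simp only [antiWick, conjTranspose_sum_smul_vecMulVec, rectAvg_conj]
  · rw [antiWick, trace_sum_smul_vecMulVec hcoh]
    simp only [rectAvg, ← Finset.mul_sum, sum_setIntegral_rectSet hfi]
end
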